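/- arXiv:1802.02991 — 9 statements merged into one kernel-verified Lean document; each statement's English description precedes it below -/
import Mathlib

section
/- The function F(z) = (1+z)/z² · log(1+z) − 1/z is strictly decreasing on (0,∞), with F(z) → 1/2 as z → 0⁺ and F(z) → 0 as z → ∞. -/
/-!
Writing `F z = ((1 + z) log (1 + z) - z) / z²`, one finds
`F' z = (2z - (z + 2) log (1 + z)) / z³`, which is negative because `log (1 + z) > 2z / (z + 2)`.
The same lower bound together with `log (1 + z) ≤ ((1 + z) - (1 + z)⁻¹) / 2` (that is, `t ≤ sinh t`)
traps `F z` between `1 / (z + 2)` and `1 / 2`, which gives the limit at `0⁺`; at infinity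
`F z ≈ log z / z`.
-/

open Filter Set Real Topology

noncomputable def parisiF (z : ℝ) : ℝ := (1 + z) / z ^ 2 * log (1 + z) - 1 / z

-- Also true at `z = 0`, where both sides are `0` by the convention `x / 0 = 0`.
lemma parisiF_eq_div (z : ℝ) : parisiF z = ((1 + z) * log (1 + z) - z) / z ^ 2 := by
  rcases eq_or_ne z 0 with rfl | hz
  · simp [parisiF]
  · rw [parisiF]
    field_simp

lemma log_le_sub_inv_div_two {x : ℝ} (hx : 1 ≤ x) : log x ≤ (x - x⁻¹) / 2 := by
  have h := self_le_sinh_iff.mpr (log_nonneg hx)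
  rwa [sinh_eq, exp_log (by linarith), exp_neg, exp_log (by linarith)] at h

lemma inv_add_two_le_parisiF {z : ℝ} (hz : 0 < z) : 1 / (z + 2) ≤ parisiF z := by
  rw [parisiF_eq_div, le_div_iff₀ (by positivity), one_div_mul_eq_div, div_le_iff₀ (by positivity)]
  have h := le_log_one_add_of_nonneg hz.le
  rw [div_le_iff₀ (by positivity)] at h
  nlinarith [mul_le_mul_of_nonneg_left h (by positivity : (0 : ℝ) ≤ 1 + z)]

lemma parisiF_le_half {z : ℝ} (hz : 0 ≤ z) : parisiF z ≤ 1 / 2 := by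
  rcases hz.eq_or_lt with rfl | hz
  · simp [parisiF]
  rw [parisiF_eq_div, div_le_iff₀ (by positivity)]
  have h := log_le_sub_inv_div_two (x := 1 + z) (by linarith)
  have h1 : (1 + z) * (1 + z)⁻¹ = 1 := mul_inv_cancel₀ (by positivity)
  nlinarith

lemma hasDerivAt_parisiF {x : ℝ} (hx : x ≠ 0) (hx₁ : 1 + x ≠ 0) :
    HasDerivAt parisiF ((2 * x - (x + 2) * log (1 + x)) / x ^ 3) x := by
  have hlog : HasDerivAt (fun z => log (1 + z)) (1 / (1 + x)) x := by
    simpa using ((hasDerivAt_id x).const_add 1).log hx₁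
  have hnum : HasDerivAt (fun z => (1 + z) * log (1 + z) - z) (log (1 + x)) x := by
    refine ((((hasDerivAt_id' x).const_add 1).mul hlog).sub (hasDerivAt_id' x)).congr_deriv ?_
    field_simp
    ring
  rw [show parisiF = fun z => ((1 + z) * log (1 + z) - z) / z ^ 2 from funext parisiF_eq_div]
  refine (hnum.div (hasDerivAt_pow 2 x) (pow_ne_zero 2 hx)).congr_deriv ?_
  field_simp
  ring

lemma strictAntiOn_parisiF : StrictAntiOn parisiF (Ioi 0) := by
  have hderiv {x : ℝ} (hx : 0 < x) := hasDerivAt_parisiF hx.ne' (by linarith)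
  refine strictAntiOn_of_deriv_neg (convex_Ioi 0)
    (fun x hx => (hderiv hx).continuousAt.continuousWithinAt) fun x hx => ?_
  replace hx : 0 < x := by rwa [interior_Ioi] at hx
  rw [(hderiv hx).deriv]
  have h := lt_log_one_add_of_pos hx
  rw [div_lt_iff₀ (by positivity)] at h
  exact div_neg_of_neg_of_pos (by linarith) (by positivity)

lemma tendsto_parisiF_nhdsGT_zero : Tendsto parisiF (𝓝[>] 0) (𝓝 (1 / 2)) := by
  have hlower : Tendsto (fun z : ℝ => 1 / (z + 2)) (𝓝[>] 0) (𝓝 (1 / 2)) := by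
    have : ContinuousAt (fun z : ℝ => 1 / (z + 2)) 0 := by fun_prop (disch := norm_num)
    simpa using this.tendsto.mono_left nhdsWithin_le_nhds
  refine tendsto_of_tendsto_of_tendsto_of_le_of_le' hlower tendsto_const_nhds ?_ ?_
  · filter_upwards [self_mem_nhdsWithin] with z hz using inv_add_two_le_parisiF hz
  · filter_upwards [self_mem_nhdsWithin] with z hz using parisiF_le_half (le_of_lt hz)

lemma tendsto_parisiF_atTop : Tendsto parisiF atTop (𝓝 0) := by
  have hlog : Tendsto (fun z : ℝ => log (1 + z) / (1 + z)) atTop (𝓝 0) :=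
    isLittleO_log_id_atTop.tendsto_div_nhds_zero.comp (tendsto_atTop_add_const_left _ 1 tendsto_id)
  have hratio : Tendsto (fun z : ℝ => 1 + z⁻¹) atTop (𝓝 1) := by
    simpa using tendsto_inv_atTop_zero.const_add (1 : ℝ)
  have h := (hlog.mul (hratio.pow 2)).sub tendsto_inv_atTop_zero
  rw [zero_mul, zero_sub, neg_zero] at h
  refine h.congr' ?_
  filter_upwards [eventually_gt_atTop 0] with z hz
  rw [parisiF]
  field_simp
  ring

/-- The function `F(z) = (1+z)/z² · log(1+z) − 1/z` is strictly decreasing on `(0,∞)`,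
tends to `1/2` as `z → 0⁺` and to `0` as `z → ∞`. -/
theorem F_strictAnti_and_limits :
    StrictAntiOn (fun z : ℝ => (1 + z) / z ^ 2 * Real.log (1 + z) - 1 / z) (Ioi 0) ∧
    Tendsto (fun z : ℝ => (1 + z) / z ^ 2 * Real.log (1 + z) - 1 / z)
      (nhdsWithin 0 (Ioi 0)) (nhds (1 / 2)) ∧
    Tendsto (fun z : ℝ => (1 + z) / z ^ 2 * Real.log (1 + z) - 1 / z)
      atTop (nhds 0) :=
  ⟨strictAntiOn_parisiF, tendsto_parisiF_nhdsGT_zero, tendsto_parisiF_atTop⟩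
end

section
/- Let ξ(x) = Σ_{p≥2} c_p² x^p with nonnegative coefficients, ξ(1)=1, ξ ≠ x², and fix q ∈ (0,1). Define f₂(q,z) = (1−q)(ξ'(1)−ξ'(q))·((1+z)/z²·log(1+z) − 1/z) + ξ'(q)(1−q) − 1 + ξ(q) for z > 0. Then there exists a unique z > 0 with f₂(q,z) = 0. -/
/-!
Write `m = 1 - ξ(q) - (1 - q) ξ'(q)` and `A = (1 - q)(ξ'(1) - ξ'(q))`, so that
`f₂(q, z) = A g(z) - m` with `g(z) = (1 + z)/z² log(1 + z) - 1/z`. Since `(z + 2) log(1 + z) > 2z`,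
`g` decreases strictly on `(0, ∞)`, stays above `1/(z + 2)` and tends to `0`, so it takes every
value in `(0, 1/2)` exactly once. Coefficientwise, `m` and `A/2 - m` are sums of `c_p` times
nonnegative polynomials in `q`, comparisons of `1 - q^p = (1 - q) ∑_{k<p} q^k` with its smallest
term and with its paired terms `q^k + q^(p-1-k) ≤ 1 + q^(p-1)`. The first is positive for `p ≥ 2`;
the second vanishes at `p = 2` and is positive for `p ≥ 3`, whence `0 < m/A < 1/2`.
-/

open Real Set

lemma mul_nat_mul_pow_pred_le_one_sub_pow {q : ℝ} (hq0 : 0 ≤ q) (hq1 : q ≤ 1) (p : ℕ) :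
    (1 - q) * (p * q ^ (p - 1)) ≤ 1 - q ^ p := by
  rw [← mul_neg_geom_sum]
  refine mul_le_mul_of_nonneg_left ?_ (sub_nonneg.2 hq1)
  calc (p : ℝ) * q ^ (p - 1) = ∑ _k ∈ Finset.range p, q ^ (p - 1) := by simp
    _ ≤ ∑ k ∈ Finset.range p, q ^ k := Finset.sum_le_sum fun k hk =>
      pow_le_pow_of_le_one hq0 hq1 (by grind)

lemma mul_nat_mul_pow_pred_lt_one_sub_pow {q : ℝ} (hq0 : 0 ≤ q) (hq1 : q < 1) {p : ℕ}
    (hp : 2 ≤ p) : (1 - q) * (p * q ^ (p - 1)) < 1 - q ^ p := by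
  rw [← mul_neg_geom_sum]
  refine mul_lt_mul_of_pos_left ?_ (sub_pos.2 hq1)
  calc (p : ℝ) * q ^ (p - 1) = ∑ _k ∈ Finset.range p, q ^ (p - 1) := by simp
    _ < ∑ k ∈ Finset.range p, q ^ k :=
      Finset.sum_lt_sum (fun k hk => pow_le_pow_of_le_one hq0 hq1.le (by grind))
        ⟨0, by simp; omega, by simpa using pow_lt_one₀ hq0 hq1 (by omega : p - 1 ≠ 0)⟩

lemma two_mul_one_sub_pow_le {q : ℝ} (hq0 : 0 ≤ q) (hq1 : q ≤ 1) (p : ℕ) :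
    2 * (1 - q ^ p) ≤ (1 - q) * (p * (1 + q ^ (p - 1))) := by
  rw [← mul_neg_geom_sum, mul_left_comm]
  refine mul_le_mul_of_nonneg_left ?_ (sub_nonneg.2 hq1)
  calc 2 * ∑ k ∈ Finset.range p, q ^ k = ∑ k ∈ Finset.range p, (q ^ k + q ^ (p - 1 - k)) := by
        rw [Finset.sum_add_distrib, Finset.sum_range_reflect (q ^ ·) p]; ring
    _ ≤ ∑ _k ∈ Finset.range p, (1 + q ^ (p - 1)) := Finset.sum_le_sum fun k hk => by
        rw [Finset.mem_range] at hk
        have : q ^ (p - 1) = q ^ k * q ^ (p - 1 - k) := by rw [← pow_add]; congr 1; omega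
        nlinarith [pow_le_one₀ hq0 hq1 (n := k), pow_le_one₀ hq0 hq1 (n := p - 1 - k)]
    _ = p * (1 + q ^ (p - 1)) := by simp; ring

lemma two_mul_one_sub_pow_lt {q : ℝ} (hq0 : 0 ≤ q) (hq1 : q < 1) {p : ℕ} (hp : 3 ≤ p) :
    2 * (1 - q ^ p) < (1 - q) * (p * (1 + q ^ (p - 1))) := by
  rw [← mul_neg_geom_sum, mul_left_comm]
  refine mul_lt_mul_of_pos_left ?_ (sub_pos.2 hq1)
  have hpair (k : ℕ) (hk : k < p) : q ^ (p - 1) = q ^ k * q ^ (p - 1 - k) := by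
    rw [← pow_add]; congr 1; omega
  calc 2 * ∑ k ∈ Finset.range p, q ^ k = ∑ k ∈ Finset.range p, (q ^ k + q ^ (p - 1 - k)) := by
        rw [Finset.sum_add_distrib, Finset.sum_range_reflect (q ^ ·) p]; ring
    _ < ∑ _k ∈ Finset.range p, (1 + q ^ (p - 1)) := by
        refine Finset.sum_lt_sum (fun k hk => ?_) ⟨1, by simp; omega, ?_⟩
        · rw [Finset.mem_range] at hk
          nlinarith [hpair k hk, pow_le_one₀ hq0 hq1.le (n := k),
            pow_le_one₀ hq0 hq1.le (n := p - 1 - k)]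
        · nlinarith [hpair 1 (by omega), pow_lt_one₀ hq0 hq1 (by omega : p - 1 - 1 ≠ 0)]
    _ = p * (1 + q ^ (p - 1)) := by simp; ring

lemma abs_pow_le_two_pow {x : ℝ} (hx : |x| ≤ 1) (p : ℕ) : |x ^ p| ≤ 2 ^ p := by
  rw [abs_pow]
  exact (pow_le_one₀ (abs_nonneg x) hx).trans (one_le_pow₀ one_le_two)

lemma abs_nat_mul_pow_pred_le_two_pow {x : ℝ} (hx : |x| ≤ 1) (p : ℕ) :
    |p * x ^ (p - 1)| ≤ 2 ^ p := by
  rw [abs_mul, abs_pow, Nat.abs_cast]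
  calc (p : ℝ) * |x| ^ (p - 1) ≤ p * 1 := by gcongr; exact pow_le_one₀ (abs_nonneg x) hx
    _ ≤ 2 ^ p := by rw [mul_one]; exact_mod_cast Nat.lt_two_pow_self.le

lemma summable_mul_of_abs_le_two_pow {c u : ℕ → ℝ} (hc : ∀ p, 0 ≤ c p)
    (hsum : Summable fun p => 2 ^ p * c p) (hu : ∀ p, |u p| ≤ 2 ^ p) :
    Summable fun p => c p * u p :=
  hsum.of_norm_bounded fun p => by
    rw [Real.norm_eq_abs, abs_mul, abs_of_nonneg (hc p), mul_comm]
    exact mul_le_mul_of_nonneg_right (hu p) (hc p)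

-- `2z/(z+2)` is the first term of `log (1 + 1/a) = ∑ 2/(2k+1) (2a+1)^-(2k+1)` at `a = 1/z`.
lemma two_mul_div_add_two_lt_log_one_add {z : ℝ} (hz : 0 < z) :
    2 * z / (z + 2) < log (1 + z) := by
  have hs := hasSum_log_one_add_inv (inv_pos.2 hz)
  rw [inv_inv] at hs
  have hpartial := sum_le_hasSum (Finset.range 2) (fun k _ => by positivity) hs
  have hterm₁ : 0 < (2 : ℝ) * (1 / (2 * 1 + 1)) * (1 / (2 * z⁻¹ + 1)) ^ (2 * 1 + 1) := by
    positivity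
  have hterm₀ :
      (2 : ℝ) * (1 / (2 * 0 + 1)) * (1 / (2 * z⁻¹ + 1)) ^ (2 * 0 + 1) = 2 * z / (z + 2) := by
    norm_num
    field_simp
    ring
  simp only [Finset.sum_range_succ, Finset.sum_range_zero, Nat.cast_zero, Nat.cast_one]
    at hpartial
  linarith

noncomputable def f2Shape (z : ℝ) : ℝ := (1 + z) / z ^ 2 * log (1 + z) - 1 / z

lemma hasDerivAt_f2Shape {z : ℝ} (hz : 0 < z) :
    HasDerivAt f2Shape ((2 * z - (z + 2) * log (1 + z)) / z ^ 3) z := by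
  have hlog : HasDerivAt (fun z => log (1 + z)) (1 / (1 + z)) z := by
    simpa using ((hasDerivAt_id z).const_add 1).log (by positivity)
  have hquot : HasDerivAt (fun z => (1 + z) / z ^ 2)
      ((1 * z ^ 2 - (1 + z) * (2 * z ^ 1)) / (z ^ 2) ^ 2) z :=
    ((hasDerivAt_id z).const_add 1).div (hasDerivAt_pow 2 z) (by positivity)
  have hinv : HasDerivAt (fun z : ℝ => 1 / z) (-(z ^ 2)⁻¹) z := by
    simpa only [one_div] using hasDerivAt_inv hz.ne'
  exact ((hquot.mul hlog).sub hinv).congr_deriv (by field_simp; ring)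

lemma f2Shape_strictAntiOn : StrictAntiOn f2Shape (Ioi 0) := by
  refine strictAntiOn_of_deriv_neg (convex_Ioi 0)
    (HasDerivAt.continuousOn fun z hz => hasDerivAt_f2Shape hz) fun z hz => ?_
  rw [interior_Ioi] at hz
  have hlog := two_mul_div_add_two_lt_log_one_add hz
  rw [div_lt_iff₀ (by linarith [hz.out])] at hlog
  rw [(hasDerivAt_f2Shape hz).deriv]
  exact div_neg_of_neg_of_pos (by linarith) (pow_pos hz 3)

lemma one_div_add_two_lt_f2Shape {z : ℝ} (hz : 0 < z) : 1 / (z + 2) < f2Shape z := by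
  have hlog := two_mul_div_add_two_lt_log_one_add hz
  have key : f2Shape z - 1 / (z + 2) = (1 + z) / z ^ 2 * (log (1 + z) - 2 * z / (z + 2)) := by
    unfold f2Shape; field_simp; ring
  nlinarith [div_pos (by linarith : 0 < 1 + z) (pow_pos hz 2)]

lemma f2Shape_lt_two_mul_log_div {z : ℝ} (hz : 1 ≤ z) : f2Shape z < 2 * log (1 + z) / z := by
  have hz0 : 0 < z := by linarith
  have hlog : 0 ≤ log (1 + z) := log_nonneg (by linarith)
  calc f2Shape z < (1 + z) / z ^ 2 * log (1 + z) := by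
        unfold f2Shape; linarith [one_div_pos.2 hz0]
    _ ≤ 2 * z / z ^ 2 * log (1 + z) := by gcongr; linarith
    _ = 2 * log (1 + z) / z := by field_simp

lemma existsUnique_f2Shape_eq {t : ℝ} (ht0 : 0 < t) (ht : t < 1 / 2) :
    ∃! z, 0 < z ∧ f2Shape z = t := by
  set s := 4 / t with hs
  have hts : t * s = 4 := by rw [hs]; field_simp
  have hs8 : 8 < s := by rw [hs, lt_div_iff₀ ht0]; linarith
  have hexp : s + s ^ 2 / 2 ≤ exp s - 1 := by
    linarith [quadratic_le_exp_of_nonneg (x := s) (by linarith)]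
  have hz₁ : 1 ≤ exp s - 1 := by nlinarith
  have hz₀ : 0 < 1 / t - 2 := by rw [sub_pos, lt_div_iff₀ ht0]; linarith
  -- at `z = exp s - 1` the bound `2 log (1 + z) / z = 2s / z` is at most `4 / s = t`
  have hlt : f2Shape (exp s - 1) < t := by
    have := f2Shape_lt_two_mul_log_div hz₁
    rw [add_sub_cancel, log_exp] at this
    refine this.trans_le ((div_le_iff₀ (by linarith)).2 ?_)
    nlinarith [mul_le_mul_of_nonneg_left hexp ht0.le]
  have hgt : t < f2Shape (1 / t - 2) := by
    simpa using one_div_add_two_lt_f2Shape hz₀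
  obtain ⟨z, hz, hzt⟩ := isPreconnected_Ioi.intermediate_value (f := f2Shape)
    (show exp s - 1 ∈ Ioi 0 by simp only [mem_Ioi]; linarith) hz₀
    (HasDerivAt.continuousOn fun z hz => hasDerivAt_f2Shape hz) ⟨hlt.le, hgt.le⟩
  exact ⟨z, ⟨hz, hzt⟩, fun y ⟨hy, hyt⟩ =>
    f2Shape_strictAntiOn.injOn hy hz (hyt.trans hzt.symm)⟩

theorem f2_unique_zero_general
    (c : ℕ → ℝ) (hc : ∀ p, 0 ≤ c p)
    (hsum : Summable (fun p : ℕ => (2 : ℝ) ^ p * c p))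
    (hnorm : (∑' p : ℕ, c p) = 1)
    (hne : ∃ p : ℕ, 3 ≤ p ∧ 0 < c p)
    (xi xi' : ℝ → ℝ)
    (hxi : ∀ x : ℝ, xi x = ∑' p : ℕ, c p * x ^ p)
    (hxi' : ∀ x : ℝ, xi' x = ∑' p : ℕ, (p : ℝ) * c p * x ^ (p - 1))
    (q : ℝ) (hq : 0 < q) (hq1 : q < 1) :
    ∃! z : ℝ, 0 < z ∧
      (1 - q) * (xi' 1 - xi' q) * ((1 + z) / z ^ 2 * Real.log (1 + z) - 1 / z)
        + xi' q * (1 - q) - 1 + xi q = 0 := by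
  obtain ⟨p₀, hp₀, hcp₀⟩ := hne
  have hξ {x : ℝ} (hx : |x| ≤ 1) : HasSum (fun p => c p * x ^ p) (xi x) :=
    hxi x ▸ (summable_mul_of_abs_le_two_pow hc hsum (abs_pow_le_two_pow hx)).hasSum
  have hξ' {x : ℝ} (hx : |x| ≤ 1) : HasSum (fun p => c p * (p * x ^ (p - 1))) (xi' x) := by
    convert (summable_mul_of_abs_le_two_pow hc hsum (abs_nat_mul_pow_pred_le_two_pow hx)).hasSum
      using 1
    exact (hxi' x).trans (tsum_congr fun p => by ring)
  have hq' : |q| ≤ 1 := by rw [abs_of_pos hq]; exact hq1.le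
  have h1 : HasSum c 1 := by simpa [hxi, hnorm] using hξ (x := 1) (by simp)
  have h1' : HasSum (fun p => c p * p) (xi' 1) := by simpa using hξ' (x := 1) (by simp)
  have hm : 0 < 1 - xi q - xi' q * (1 - q) := by
    refine hasSum_lt (f := fun _ => 0) (i := p₀) (fun p => ?_) ?_ hasSum_zero
      ((h1.sub (hξ hq')).sub ((hξ' hq').mul_right (1 - q)))
    · linarith [mul_nonneg (hc p)
        (sub_nonneg.2 (mul_nat_mul_pow_pred_le_one_sub_pow hq.le hq1.le p))]
    · linarith [mul_pos hcp₀ (sub_pos.2 (mul_nat_mul_pow_pred_lt_one_sub_pow hq.le hq1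
        (p := p₀) (by omega)))]
  have hmA : 0 < (1 - q) * (xi' 1 - xi' q) - 2 * (1 - xi q - xi' q * (1 - q)) := by
    refine hasSum_lt (f := fun _ => 0) (i := p₀) (fun p => ?_) ?_ hasSum_zero
      (((h1'.sub (hξ' hq')).mul_left (1 - q)).sub
        (((h1.sub (hξ hq')).sub ((hξ' hq').mul_right (1 - q))).mul_left 2))
    · linarith [mul_nonneg (hc p) (sub_nonneg.2 (two_mul_one_sub_pow_le hq.le hq1.le p))]
    · linarith [mul_pos hcp₀ (sub_pos.2 (two_mul_one_sub_pow_lt hq.le hq1 hp₀))]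
  have hA : 0 < (1 - q) * (xi' 1 - xi' q) := by linarith
  refine (existsUnique_congr fun z => and_congr_right fun _ => ?_).mpr
    (existsUnique_f2Shape_eq (div_pos hm hA) ((div_lt_iff₀ hA).2 (by linarith)))
  rw [eq_div_iff hA.ne', f2Shape]
  constructor <;> intro h <;> linarith

/-- For `ξ(x) = ∑_{p≥2} c_p x^p` with nonnegative coefficients, `ξ(1)=1`, `ξ ≠ x²`, and
`q ∈ (0,1)`, there exists a unique `z > 0` with
`f₂(q,z) = (1−q)(ξ'(1)−ξ'(q))((1+z)/z² log(1+z) − 1/z) + ξ'(q)(1−q) − 1 + ξ(q) = 0`. -/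
theorem f2_unique_zero
    (c : ℕ → ℝ) (hc : ∀ p, 0 ≤ c p) (hc0 : c 0 = 0) (hc1 : c 1 = 0)
    (hsum : Summable (fun p : ℕ => (2 : ℝ) ^ p * c p))
    (hnorm : (∑' p : ℕ, c p) = 1)
    (hne : ∃ p : ℕ, 3 ≤ p ∧ 0 < c p)
    (xi xi' : ℝ → ℝ)
    (hxi : ∀ x : ℝ, xi x = ∑' p : ℕ, c p * x ^ p)
    (hxi' : ∀ x : ℝ, xi' x = ∑' p : ℕ, (p : ℝ) * c p * x ^ (p - 1))
    (q : ℝ) (hq : 0 < q) (hq1 : q < 1) :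
    ∃! z : ℝ, 0 < z ∧
      (1 - q) * (xi' 1 - xi' q) * ((1 + z) / z ^ 2 * Real.log (1 + z) - 1 / z)
        + xi' q * (1 - q) - 1 + xi q = 0 :=
  f2_unique_zero_general c hc hsum hnorm hne xi xi' hxi hxi' q hq hq1
end

section
/- Let ξ(x) = Σ_{p≥2} c_p² x^p with nonnegative coefficients, ξ(1)=1, ξ ≠ x². Then for every q ∈ (0,1), ξ'(q)(1−q) − 1 + ξ(q) < 0. -/
/-!
The quantity `q ^ p + p q ^ (p - 1) (1 - q)` is the value at `1` of the tangent to `x ↦ x ^ p`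
at `q`, so by convexity (Bernoulli's inequality) it is at most `1`, strictly so when `p ≥ 2`.
Hence `ξ'(q)(1 - q) + ξ(q) = ∑ c_p (q ^ p + p q ^ (p - 1) (1 - q)) < ∑ c_p = 1`, strictness coming
from a single coefficient `c_p > 0` with `p ≥ 3`.
-/

section TangentBound

variable {q : ℝ}

lemma pow_add_mul_pow_pred_mul_one_sub_le_one (hq0 : 0 ≤ q) (p : ℕ) :
    q ^ p + p * q ^ (p - 1) * (1 - q) ≤ 1 := by
  simpa using pow_add_mul_le_add_pow hq0 (by linarith : 0 ≤ 2 * q + (1 - q)) p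

lemma pow_add_mul_pow_pred_mul_one_sub_lt_one (hq0 : 0 ≤ q) (hq1 : q < 1) {p : ℕ} (hp : 2 ≤ p) :
    q ^ p + p * q ^ (p - 1) * (1 - q) < 1 := by
  obtain ⟨n, rfl⟩ : ∃ n, p = n + 2 := ⟨p - 2, by omega⟩
  have hprev := pow_add_mul_pow_pred_mul_one_sub_le_one hq0 (n + 1)
  have hpow : q ^ (n + 1) < 1 := pow_lt_one₀ hq0 hq1 (by omega)
  have hstep : q ^ (n + 2) + ((n + 2 : ℕ) : ℝ) * q ^ (n + 2 - 1) * (1 - q)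
      = q * (q ^ (n + 1) + ((n + 1 : ℕ) : ℝ) * q ^ (n + 1 - 1) * (1 - q))
        + q ^ (n + 1) * (1 - q) := by
    simp only [Nat.add_sub_cancel]
    push_cast
    ring
  rw [hstep]
  nlinarith

lemma natCast_mul_pow_pred_le_inv_one_sub (hq0 : 0 ≤ q) (hq1 : q < 1) (p : ℕ) :
    p * q ^ (p - 1) ≤ (1 - q)⁻¹ := by
  rw [← one_div, le_div_iff₀ (by linarith)]
  linarith [pow_add_mul_pow_pred_mul_one_sub_le_one hq0 p, pow_nonneg hq0 p]

end TangentBound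

lemma Summable.mul_of_nonneg_of_le {ι : Type*} {c g : ι → ℝ} {C : ℝ} (hc : Summable c)
    (hc0 : ∀ i, 0 ≤ c i) (hg0 : ∀ i, 0 ≤ g i) (hgC : ∀ i, g i ≤ C) :
    Summable fun i => c i * g i :=
  .of_nonneg_of_le (fun i => mul_nonneg (hc0 i) (hg0 i))
    (fun i => mul_le_mul_of_nonneg_left (hgC i) (hc0 i)) (hc.mul_right C)

theorem f2_at_infty_neg_general
    (c : ℕ → ℝ) (hc : ∀ p, 0 ≤ c p)
    (hnorm : (∑' p : ℕ, c p) = 1)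
    (hne : ∃ p : ℕ, 3 ≤ p ∧ 0 < c p)
    (xi xi' : ℝ → ℝ)
    (hxi : ∀ x : ℝ, xi x = ∑' p : ℕ, c p * x ^ p)
    (hxi' : ∀ x : ℝ, xi' x = ∑' p : ℕ, (p : ℝ) * c p * x ^ (p - 1)) :
    ∀ q : ℝ, 0 < q → q < 1 → xi' q * (1 - q) - 1 + xi q < 0 := by
  intro q hq0 hq1
  obtain ⟨p₀, hp₀, hcp₀⟩ := hne
  have hc_summable : Summable c := by
    by_contra h
    rw [tsum_eq_zero_of_not_summable h] at hnorm
    exact zero_ne_one hnorm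
  have hxi_sum : HasSum (fun p => c p * q ^ p) (xi q) := by
    rw [hxi]
    exact (hc_summable.mul_of_nonneg_of_le hc (fun p => pow_nonneg hq0.le p)
      (fun p => pow_le_one₀ hq0.le hq1.le)).hasSum
  have hxi'_sum : HasSum (fun p : ℕ => (p : ℝ) * c p * q ^ (p - 1)) (xi' q) := by
    rw [hxi']
    exact (Summable.congr (hc_summable.mul_of_nonneg_of_le hc (fun p => by positivity)
      (natCast_mul_pow_pred_le_inv_one_sub hq0.le hq1)) fun p => by ring).hasSum
  have hterm : ∀ p : ℕ, (p : ℝ) * c p * q ^ (p - 1) * (1 - q) + c p * q ^ p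
      = c p * (q ^ p + p * q ^ (p - 1) * (1 - q)) := fun p => by ring
  have hlt := hasSum_lt (i := p₀)
    (fun p => (hterm p).trans_le <|
      mul_le_of_le_one_right (hc p) (pow_add_mul_pow_pred_mul_one_sub_le_one hq0.le p))
    ((hterm p₀).trans_lt <|
      mul_lt_of_lt_one_right hcp₀ (pow_add_mul_pow_pred_mul_one_sub_lt_one hq0.le hq1 (by omega)))
    ((hxi'_sum.mul_right (1 - q)).add hxi_sum) (hnorm ▸ hc_summable.hasSum)
  linarith

/-- For `ξ(x) = ∑_{p≥2} c_p x^p` with nonnegative coefficients, `ξ(1)=1`, `ξ ≠ x²`,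
one has `ξ'(q)(1−q) − 1 + ξ(q) < 0` for every `q ∈ (0,1)`. -/
theorem f2_at_infty_neg
    (c : ℕ → ℝ) (hc : ∀ p, 0 ≤ c p) (hc0 : c 0 = 0) (hc1 : c 1 = 0)
    (hsum : Summable (fun p : ℕ => (2 : ℝ) ^ p * c p))
    (hnorm : (∑' p : ℕ, c p) = 1)
    (hne : ∃ p : ℕ, 3 ≤ p ∧ 0 < c p)
    (xi xi' : ℝ → ℝ)
    (hxi : ∀ x : ℝ, xi x = ∑' p : ℕ, c p * x ^ p)
    (hxi' : ∀ x : ℝ, xi' x = ∑' p : ℕ, (p : ℝ) * c p * x ^ (p - 1)) :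
    ∀ q : ℝ, 0 < q → q < 1 → xi' q * (1 - q) - 1 + xi q < 0 :=
  f2_at_infty_neg_general c hc hnorm hne xi xi' hxi hxi'
end

section
/- Let ξ(x) = Σ_{p≥2} c_p² x^p with nonnegative coefficients, ξ(1)=1, ξ ≠ x², and define h(q) = (1/2)(1−q)(ξ'(1)−ξ'(q)) + ξ'(q)(1−q) − 1 + ξ(q). Then h(q) > 0 for all q ∈ (0,1). -/
/-!
Since `∑ c p = 1`, the function `h` is the `c`-weighted sum of the functions `h_p` obtained from
the single monomials `ξ = x ^ p` (`hTerm q p`). For `p = n + 1` one computes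
`h_p(q) = (1 - q) / 2 * ((n + 1) * (1 + q ^ n) - 2 * ∑_{k ≤ n} q ^ k)`, and pairing `k` with
`n - k` shows that the bracket is nonnegative on `[0, 1]`, because
`q ^ n + 1 - q ^ k - q ^ (n - k) = (1 - q ^ k) * (1 - q ^ (n - k))`. For `n ≥ 2` the pair `k = 1`
makes it strictly positive on `(0, 1)`, and some `c p` with `p ≥ 3` is positive.
-/

open Finset

lemma two_mul_sum_range_eq_sum_add_reflect {R : Type*} [NonAssocSemiring R] (f : ℕ → R)
    (n : ℕ) : 2 * ∑ k ∈ range (n + 1), f k = ∑ k ∈ range (n + 1), (f k + f (n - k)) := by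
  rw [two_mul, sum_add_distrib, ← sum_range_reflect f (n + 1)]
  simp only [add_tsub_cancel_right]

section PowersOfUnitInterval

variable {q : ℝ}

lemma pow_add_pow_sub_le (hq0 : 0 ≤ q) (hq1 : q ≤ 1) {k n : ℕ} (hkn : k ≤ n) :
    q ^ k + q ^ (n - k) ≤ 1 + q ^ n := by
  have hprod : q ^ k * q ^ (n - k) = q ^ n := by rw [← pow_add, Nat.add_sub_cancel' hkn]
  nlinarith [mul_nonneg (sub_nonneg.2 (pow_le_one₀ hq0 hq1 (n := k)))
    (sub_nonneg.2 (pow_le_one₀ hq0 hq1 (n := n - k)))]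

lemma pow_add_pow_sub_lt (hq0 : 0 ≤ q) (hq1 : q < 1) {k n : ℕ} (hk : 0 < k) (hkn : k < n) :
    q ^ k + q ^ (n - k) < 1 + q ^ n := by
  have hprod : q ^ k * q ^ (n - k) = q ^ n := by rw [← pow_add, Nat.add_sub_cancel' hkn.le]
  nlinarith [mul_pos (sub_pos.2 (pow_lt_one₀ hq0 hq1 hk.ne'))
    (sub_pos.2 (pow_lt_one₀ hq0 hq1 (Nat.sub_pos_of_lt hkn).ne'))]

lemma two_mul_geom_sum_le (hq0 : 0 ≤ q) (hq1 : q ≤ 1) (n : ℕ) :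
    2 * ∑ k ∈ range (n + 1), q ^ k ≤ (n + 1) * (1 + q ^ n) := by
  rw [two_mul_sum_range_eq_sum_add_reflect]
  calc ∑ k ∈ range (n + 1), (q ^ k + q ^ (n - k))
      ≤ ∑ _k ∈ range (n + 1), (1 + q ^ n) :=
        sum_le_sum fun k hk => pow_add_pow_sub_le hq0 hq1 (Nat.lt_succ_iff.1 (mem_range.1 hk))
    _ = (n + 1) * (1 + q ^ n) := by rw [sum_const, card_range, nsmul_eq_mul]; push_cast; ring

lemma two_mul_geom_sum_lt (hq0 : 0 ≤ q) (hq1 : q < 1) {n : ℕ} (hn : 2 ≤ n) :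
    2 * ∑ k ∈ range (n + 1), q ^ k < (n + 1) * (1 + q ^ n) := by
  rw [two_mul_sum_range_eq_sum_add_reflect]
  calc ∑ k ∈ range (n + 1), (q ^ k + q ^ (n - k))
      < ∑ _k ∈ range (n + 1), (1 + q ^ n) :=
        sum_lt_sum
          (fun k hk => pow_add_pow_sub_le hq0 hq1.le (Nat.lt_succ_iff.1 (mem_range.1 hk)))
          ⟨1, mem_range.2 (by omega), pow_add_pow_sub_lt hq0 hq1 one_pos (by omega)⟩
    _ = (n + 1) * (1 + q ^ n) := by rw [sum_const, card_range, nsmul_eq_mul]; push_cast; ring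

end PowersOfUnitInterval

noncomputable def hTerm (q : ℝ) (p : ℕ) : ℝ :=
  (1 / 2) * (1 - q) * (p - p * q ^ (p - 1)) + p * q ^ (p - 1) * (1 - q) - 1 + q ^ p

lemma hTerm_zero (q : ℝ) : hTerm q 0 = 0 := by
  simp [hTerm]

lemma hTerm_succ (q : ℝ) (n : ℕ) :
    hTerm q (n + 1) = (1 - q) / 2 * ((n + 1) * (1 + q ^ n) - 2 * ∑ k ∈ range (n + 1), q ^ k) := by
  simp only [hTerm, Nat.add_sub_cancel, Nat.cast_succ]
  linear_combination -geom_sum_mul q (n + 1)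

lemma hTerm_nonneg {q : ℝ} (hq0 : 0 ≤ q) (hq1 : q ≤ 1) (p : ℕ) : 0 ≤ hTerm q p := by
  rcases p with _ | n
  · exact (hTerm_zero q).ge
  · rw [hTerm_succ]
    exact mul_nonneg (by linarith) (sub_nonneg.2 (two_mul_geom_sum_le hq0 hq1 n))

lemma hTerm_pos {q : ℝ} (hq0 : 0 ≤ q) (hq1 : q < 1) {p : ℕ} (hp : 3 ≤ p) : 0 < hTerm q p := by
  obtain ⟨n, rfl⟩ : ∃ n, p = n + 1 := ⟨p - 1, by omega⟩
  rw [hTerm_succ]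
  exact mul_pos (by linarith) (sub_pos.2 (two_mul_geom_sum_lt hq0 hq1 (by omega)))

lemma Summable.mul_pow_of_nonneg_of_le_one {f : ℕ → ℝ} (hf : Summable f) (hf0 : ∀ p, 0 ≤ f p)
    {q : ℝ} (hq0 : 0 ≤ q) (hq1 : q ≤ 1) (e : ℕ → ℕ) : Summable fun p => f p * q ^ e p :=
  hf.of_nonneg_of_le (fun p => mul_nonneg (hf0 p) (pow_nonneg hq0 _))
    fun p => mul_le_of_le_one_right (hf0 p) (pow_le_one₀ hq0 hq1)

lemma hasSum_mul_hTerm {c : ℕ → ℝ} (hc : ∀ p, 0 ≤ c p) (hc_summable : Summable c)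
    (hpc_summable : Summable fun p : ℕ => (p : ℝ) * c p) {q : ℝ} (hq0 : 0 ≤ q) (hq1 : q ≤ 1) :
    HasSum (fun p => c p * hTerm q p)
      ((1 / 2) * (1 - q) * ((∑' p : ℕ, (p : ℝ) * c p) - ∑' p : ℕ, (p : ℝ) * c p * q ^ (p - 1))
        + (∑' p : ℕ, (p : ℝ) * c p * q ^ (p - 1)) * (1 - q)
        - ∑' p, c p + ∑' p, c p * q ^ p) := by
  have hderiv := hpc_summable.mul_pow_of_nonneg_of_le_one
    (fun p => mul_nonneg p.cast_nonneg (hc p)) hq0 hq1 (· - 1)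
  have hval : Summable fun p => c p * q ^ p := hc_summable.mul_pow_of_nonneg_of_le_one hc hq0 hq1 id
  refine ((((hpc_summable.hasSum.sub hderiv.hasSum).mul_left ((1 / 2) * (1 - q))).add
    (hderiv.hasSum.mul_right (1 - q))).sub hc_summable.hasSum).add hval.hasSum |>.congr_fun
    fun p => ?_
  unfold hTerm
  ring

theorem h_pos_on_Ioo_general
    (c : ℕ → ℝ) (hc : ∀ p, 0 ≤ c p)
    (hsum : Summable (fun p : ℕ => (2 : ℝ) ^ p * c p))
    (hnorm : (∑' p : ℕ, c p) = 1)
    (hne : ∃ p : ℕ, 3 ≤ p ∧ 0 < c p)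
    (xi xi' : ℝ → ℝ)
    (hxi : ∀ x : ℝ, xi x = ∑' p : ℕ, c p * x ^ p)
    (hxi' : ∀ x : ℝ, xi' x = ∑' p : ℕ, (p : ℝ) * c p * x ^ (p - 1)) :
    ∀ q : ℝ, 0 < q → q < 1 →
      0 < (1 / 2) * (1 - q) * (xi' 1 - xi' q) + xi' q * (1 - q) - 1 + xi q := by
  intro q hq0 hq1
  have hc_summable : Summable c := hsum.of_nonneg_of_le hc
    fun p => le_mul_of_one_le_left (hc p) (one_le_pow₀ one_le_two)
  have hpc_summable : Summable fun p : ℕ => (p : ℝ) * c p :=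
    hsum.of_nonneg_of_le (fun p => mul_nonneg p.cast_nonneg (hc p))
      fun p => mul_le_mul_of_nonneg_right (by exact_mod_cast Nat.lt_two_pow_self.le) (hc p)
  have hh := hasSum_mul_hTerm hc hc_summable hpc_summable hq0.le hq1.le
  obtain ⟨p₀, hp₀, hcp₀⟩ := hne
  have hpos := hh.summable.tsum_pos (fun p => mul_nonneg (hc p) (hTerm_nonneg hq0.le hq1.le p))
    p₀ (mul_pos hcp₀ (hTerm_pos hq0.le hq1 hp₀))
  rw [hh.tsum_eq, hnorm] at hpos
  simpa only [hxi, hxi', one_pow, mul_one] using hpos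

/-- For `ξ(x) = ∑_{p≥2} c_p x^p` with nonnegative coefficients, `ξ(1)=1`, `ξ ≠ x²`,
the function `h(q) = ½(1−q)(ξ'(1)−ξ'(q)) + ξ'(q)(1−q) − 1 + ξ(q)` is positive on `(0,1)`. -/
theorem h_pos_on_Ioo
    (c : ℕ → ℝ) (hc : ∀ p, 0 ≤ c p) (hc0 : c 0 = 0) (hc1 : c 1 = 0)
    (hsum : Summable (fun p : ℕ => (2 : ℝ) ^ p * c p))
    (hnorm : (∑' p : ℕ, c p) = 1)
    (hne : ∃ p : ℕ, 3 ≤ p ∧ 0 < c p)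
    (xi xi' : ℝ → ℝ)
    (hxi : ∀ x : ℝ, xi x = ∑' p : ℕ, c p * x ^ p)
    (hxi' : ∀ x : ℝ, xi' x = ∑' p : ℕ, (p : ℝ) * c p * x ^ (p - 1)) :
    ∀ q : ℝ, 0 < q → q < 1 →
      0 < (1 / 2) * (1 - q) * (xi' 1 - xi' q) + xi' q * (1 - q) - 1 + xi q :=
  h_pos_on_Ioo_general c hc hsum hnorm hne xi xi' hxi hxi'
end

section
/- Let ξ(x) = Σ_{p≥2} c_p² x^p with nonnegative coefficients, ξ ≠ x², q ∈ (0,1). With φ as in the 2-RSB analysis and w₁ = qξ(q)(ξ'(1)−ξ'(q))/(ξ'(q)(qξ'(q)−ξ(q))(1−q)) the smaller critical point, one has φ(w₁) < 0. Explicitly, φ(w₁) = (−4qξ(q) + 2q²ξ'(q))/ξ'(q) − q²·log(1 + (qξ'(q)−2ξ(q))/ξ(q)) < 0. -/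
/-!
Both terms of `φ(w₁)` are multiples of `q²`: with `x = (qξ'(q) − 2ξ(q))/ξ(q)` the rational part
equals `q² · 2x/(2 + x)`, so `φ(w₁) = q² (2x/(2 + x) − log (1 + x))`. Since `c₀ = c₁ = 0` and some
`c_p` with `p ≥ 3` is positive, `qξ'(q) − 2ξ(q) = Σ (p − 2) c_p q^p > 0`, i.e. `x > 0`, and
`log (1 + x) > 2x/(2 + x)` for `x > 0` (the first term of the series
`log (1 + x) = Σ 2/(2k+1) (x/(x+2))^(2k+1)`).
-/

open Real

theorem two_mul_div_two_add_lt_log_one_add {x : ℝ} (hx : 0 < x) :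
    2 * x / (2 + x) < log (1 + x) := by
  have h := lt_hasSum (hasSum_log_one_add hx.le) 0 (fun _ _ => by positivity) 1 one_ne_zero
    (by positivity)
  simpa [add_comm, mul_div_assoc] using h

section PowerSeries

variable {c : ℕ → ℝ}

theorem summable_mul_of_le_two_pow (hc : ∀ p, 0 ≤ c p)
    (hsum : Summable fun p : ℕ => (2 : ℝ) ^ p * c p) {g : ℕ → ℝ} (hg₀ : ∀ p, 0 ≤ g p)
    (hg : ∀ p, g p ≤ 2 ^ p) : Summable fun p => g p * c p :=
  hsum.of_nonneg_of_le (fun p => mul_nonneg (hg₀ p) (hc p))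
    fun p => mul_le_mul_of_nonneg_right (hg p) (hc p)

theorem summable_mul_pow (hc : ∀ p, 0 ≤ c p) (hsum : Summable fun p : ℕ => (2 : ℝ) ^ p * c p)
    {x : ℝ} (hx₀ : 0 ≤ x) (hx₁ : x ≤ 1) : Summable fun p => c p * x ^ p :=
  (summable_mul_of_le_two_pow hc hsum (fun p => pow_nonneg hx₀ p)
    fun _ => (pow_le_one₀ hx₀ hx₁).trans (one_le_pow₀ one_le_two)).congr fun _ => mul_comm _ _

theorem summable_natCast_mul_mul_pow (hc : ∀ p, 0 ≤ c p)
    (hsum : Summable fun p : ℕ => (2 : ℝ) ^ p * c p) {x : ℝ} (hx₀ : 0 ≤ x) (hx₁ : x ≤ 1)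
    (k : ℕ → ℕ) : Summable fun p : ℕ => (p : ℝ) * c p * x ^ k p := by
  refine (summable_mul_of_le_two_pow hc hsum (g := fun p : ℕ => p * x ^ k p)
    (fun p => by positivity) fun p => ?_).congr fun p => mul_right_comm _ _ _
  calc (p : ℝ) * x ^ k p ≤ p := mul_le_of_le_one_right p.cast_nonneg (pow_le_one₀ hx₀ hx₁)
    _ ≤ 2 ^ p := mod_cast p.lt_two_pow_self.le

theorem mul_tsum_natCast_mul_mul_pow_sub_one (x : ℝ) :
    x * ∑' p : ℕ, (p : ℝ) * c p * x ^ (p - 1) = ∑' p : ℕ, (p : ℝ) * c p * x ^ p := by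
  rw [← tsum_mul_left]
  congr 1
  funext p
  cases p with
  | zero => simp
  | succ n => rw [Nat.add_sub_cancel, pow_succ]; ring

theorem tsum_mul_pow_pos (hc : ∀ p, 0 ≤ c p) (hsum : Summable fun p : ℕ => (2 : ℝ) ^ p * c p)
    {x : ℝ} (hx₀ : 0 < x) (hx₁ : x ≤ 1) {p₀ : ℕ} (hp₀ : 0 < c p₀) :
    0 < ∑' p : ℕ, c p * x ^ p :=
  (summable_mul_pow hc hsum hx₀.le hx₁).tsum_pos (fun p => mul_nonneg (hc p) (pow_nonneg hx₀.le p))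
    p₀ (mul_pos hp₀ (pow_pos hx₀ p₀))

theorem two_mul_tsum_lt_mul_tsum_deriv (hc : ∀ p, 0 ≤ c p) (hc₀ : c 0 = 0) (hc₁ : c 1 = 0)
    (hsum : Summable fun p : ℕ => (2 : ℝ) ^ p * c p) {x : ℝ} (hx₀ : 0 < x) (hx₁ : x ≤ 1)
    {p₀ : ℕ} (hp₀ : 3 ≤ p₀) (hcp₀ : 0 < c p₀) :
    2 * ∑' p : ℕ, c p * x ^ p < x * ∑' p : ℕ, (p : ℝ) * c p * x ^ (p - 1) := by
  rw [mul_tsum_natCast_mul_mul_pow_sub_one, ← tsum_mul_left]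
  refine Summable.tsum_lt_tsum (i := p₀) (fun p => ?_) ?_
    ((summable_mul_pow hc hsum hx₀.le hx₁).mul_left 2)
    (summable_natCast_mul_mul_pow hc hsum hx₀.le hx₁ id)
  · match p with
    | 0 => simp [hc₀]
    | 1 => simp [hc₁]
    | n + 2 =>
      have : (2 : ℝ) ≤ (n + 2 : ℕ) := by push_cast; linarith [n.cast_nonneg (α := ℝ)]
      rw [← mul_assoc]
      exact mul_le_mul_of_nonneg_right (mul_le_mul_of_nonneg_right this (hc _)) (by positivity)
  · have : (2 : ℝ) < p₀ := by exact_mod_cast hp₀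
    rw [← mul_assoc]
    exact mul_lt_mul_of_pos_right (mul_lt_mul_of_pos_right this hcp₀) (pow_pos hx₀ p₀)

theorem tsum_deriv_lt_tsum_deriv (hc : ∀ p, 0 ≤ c p)
    (hsum : Summable fun p : ℕ => (2 : ℝ) ^ p * c p) {x y : ℝ} (hx₀ : 0 ≤ x) (hxy : x < y)
    (hy₁ : y ≤ 1) {p₀ : ℕ} (hp₀ : 2 ≤ p₀) (hcp₀ : 0 < c p₀) :
    ∑' p : ℕ, (p : ℝ) * c p * x ^ (p - 1) < ∑' p : ℕ, (p : ℝ) * c p * y ^ (p - 1) := by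
  refine Summable.tsum_lt_tsum (i := p₀)
    (fun p => mul_le_mul_of_nonneg_left (pow_le_pow_left₀ hx₀ hxy.le _)
      (mul_nonneg p.cast_nonneg (hc p)))
    (mul_lt_mul_of_pos_left (pow_lt_pow_left₀ hxy hx₀ (by omega))
      (mul_pos (by positivity) hcp₀))
    (summable_natCast_mul_mul_pow hc hsum hx₀ (hxy.le.trans hy₁) _)
    (summable_natCast_mul_mul_pow hc hsum (hx₀.trans hxy.le) hy₁ _)

end PowerSeries

theorem phi_at_w1_eq {a b e q : ℝ} (hq : 0 < q) (hq₁ : q < 1) (ha : 0 < a)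
    (hab : 2 * a < q * b) (hbe : b < e) (phi : ℝ → ℝ)
    (hphi : ∀ w : ℝ, phi w =
      -((q * b - a) * (1 - q) * w / (e - b))
        - q ^ 2 * log (q * (e - b) / (w * b * (1 - q)))
        + q ^ 2 - 2 * a * q / b
        + a * q ^ 2 * (e - b) / (w * b ^ 2 * (1 - q))) :
    phi (q * a * (e - b) / (b * (q * b - a) * (1 - q)))
      = (-4 * q * a + 2 * q ^ 2 * b) / b - q ^ 2 * log (1 + (q * b - 2 * a) / a) := by
  have hb : 0 < b := pos_of_mul_pos_right (by linarith) hq.le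
  have : q * b - a ≠ 0 := by linarith
  have : e - b ≠ 0 := by linarith
  have : 1 - q ≠ 0 := by linarith
  have hlog : q * (e - b) / (q * a * (e - b) / (b * (q * b - a) * (1 - q)) * b * (1 - q))
      = 1 + (q * b - 2 * a) / a := by
    field_simp
    ring
  rw [hphi, hlog]
  field_simp
  ring

theorem critical_value_neg {a b q : ℝ} (hq : 0 < q) (ha : 0 < a) (hab : 2 * a < q * b) :
    (-4 * q * a + 2 * q ^ 2 * b) / b - q ^ 2 * log (1 + (q * b - 2 * a) / a) < 0 := by
  have hb : 0 < b := pos_of_mul_pos_right (by linarith) hq.le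
  set x := (q * b - 2 * a) / a with hx
  have hx₀ : 0 < x := div_pos (by linarith) ha
  have hrational : (-4 * q * a + 2 * q ^ 2 * b) / b = q ^ 2 * (2 * x / (2 + x)) := by
    have : 2 + x = q * b / a := by rw [hx]; field_simp; ring
    rw [this, hx]
    field_simp
    ring
  rw [hrational, ← mul_sub]
  exact mul_neg_of_pos_of_neg (by positivity)
    (sub_neg.mpr (two_mul_div_two_add_lt_log_one_add hx₀))

/-- `φ` is negative at the smaller critical point
`w₁ = qξ(q)(ξ'(1)−ξ'(q))/(ξ'(q)(qξ'(q)−ξ(q))(1−q))`, with the explicit value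
`φ(w₁) = (−4qξ(q) + 2q²ξ'(q))/ξ'(q) − q² log(1 + (qξ'(q)−2ξ(q))/ξ(q)) < 0`. -/
theorem phi_at_w1_neg
    (c : ℕ → ℝ) (hc : ∀ p, 0 ≤ c p) (hc0 : c 0 = 0) (hc1 : c 1 = 0)
    (hsum : Summable (fun p : ℕ => (2 : ℝ) ^ p * c p))
    (hne : ∃ p : ℕ, 3 ≤ p ∧ 0 < c p)
    (xi xi' : ℝ → ℝ)
    (hxi : ∀ x : ℝ, xi x = ∑' p : ℕ, c p * x ^ p)
    (hxi' : ∀ x : ℝ, xi' x = ∑' p : ℕ, (p : ℝ) * c p * x ^ (p - 1))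
    (q : ℝ) (hq : 0 < q) (hq1 : q < 1)
    (phi : ℝ → ℝ)
    (hphi : ∀ w : ℝ, phi w =
      -((q * xi' q - xi q) * (1 - q) * w / (xi' 1 - xi' q))
        - q ^ 2 * Real.log (q * (xi' 1 - xi' q) / (w * xi' q * (1 - q)))
        + q ^ 2 - 2 * xi q * q / xi' q
        + xi q * q ^ 2 * (xi' 1 - xi' q) / (w * xi' q ^ 2 * (1 - q))) :
    phi (q * xi q * (xi' 1 - xi' q) / (xi' q * (q * xi' q - xi q) * (1 - q)))
      = (-4 * q * xi q + 2 * q ^ 2 * xi' q) / xi' q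
        - q ^ 2 * Real.log (1 + (q * xi' q - 2 * xi q) / xi q) ∧
    phi (q * xi q * (xi' 1 - xi' q) / (xi' q * (q * xi' q - xi q) * (1 - q))) < 0 := by
  obtain ⟨p₀, hp₀, hcp₀⟩ := hne
  have ha : 0 < xi q := hxi q ▸ tsum_mul_pow_pos hc hsum hq hq1.le hcp₀
  have hab : 2 * xi q < q * xi' q := by
    rw [hxi, hxi']
    exact two_mul_tsum_lt_mul_tsum_deriv hc hc0 hc1 hsum hq hq1.le hp₀ hcp₀
  have hbe : xi' q < xi' 1 := by
    rw [hxi', hxi']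
    exact tsum_deriv_lt_tsum_deriv hc hsum hq.le hq1 le_rfl (by omega) hcp₀
  have hvalue := phi_at_w1_eq hq hq1 ha hab hbe phi hphi
  exact ⟨hvalue, hvalue ▸ critical_value_neg hq ha hab⟩
end

section
/- Let ξ(x) = Σ_{p≥2} c_p² x^p with nonnegative coefficients, ξ ≠ x², and q ∈ (0,1). Then the function f₁(q,·): z ↦ −[qξ'(q)−ξ(q)](1−q)(1+z)/(ξ'(1)−ξ'(q)) − q²·log(q(ξ'(1)−ξ'(q))/((1+z)ξ'(q)(1−q))) + q² − 2ξ(q)q/ξ'(q) + ξ(q)q²(ξ'(1)−ξ'(q))/((1+z)ξ'(q)²(1−q)) defined on (−1,∞) has exactly two zeros, one strictly less than the local minimum point z₂ˢ(q) and the other equal to z₂ᵇ(q) = q(ξ'(1)−ξ'(q))/((1−q)ξ'(q)) − 1. -/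
/-!
In the variable `u = 1 + z`, `f₁(q, ·)` is `a - β u + q² log u + γ / u` with `β, γ > 0`, and its
derivative `-β (u - u_s) (u - u_b) / u²` vanishes at `u_s = 1 + z₂ˢ` and `u_b = 1 + z₂ᵇ`, where
`u_s < u_b` amounts to `2 ξ(q) < q ξ'(q)` (Euler's identity `q ξ'(q) = ∑ p c_p q^p` and some
`c_p > 0` with `p ≥ 3`). So `f₁` decreases on `(0, u_s]`, increases on `[u_s, u_b]` and decreases
on `[u_b, ∞)`. Since `f₁(u_b) = 0` and `f₁ → +∞` as `u → 0⁺`, the only other zero lies in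
`(0, u_s)`.
-/

open Filter Set Topology

section PowerSeries

variable {c : ℕ → ℝ}

theorem summable_coeff_mul_pow (hc : ∀ p, 0 ≤ c p)
    (hsum : Summable fun p : ℕ => (2 : ℝ) ^ p * c p) {x : ℝ} (hx0 : 0 ≤ x) (hx1 : x ≤ 1) :
    Summable fun p => c p * x ^ p :=
  hsum.of_nonneg_of_le (fun p => mul_nonneg (hc p) (pow_nonneg hx0 p)) fun p => by
    nlinarith [hc p, pow_le_one₀ hx0 hx1 (n := p), one_le_pow₀ (M₀ := ℝ) (a := 2) (n := p) one_le_two]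

theorem summable_deriv_coeff_mul_pow (hc : ∀ p, 0 ≤ c p)
    (hsum : Summable fun p : ℕ => (2 : ℝ) ^ p * c p) {x : ℝ} (hx0 : 0 ≤ x) (hx1 : x ≤ 1) :
    Summable fun p : ℕ => (p : ℝ) * c p * x ^ (p - 1) := by
  refine hsum.of_nonneg_of_le (fun p => by have := hc p; positivity) fun p => ?_
  have hp : (p : ℝ) ≤ 2 ^ p := by exact_mod_cast (Nat.lt_two_pow_self (n := p)).le
  have hpc : 0 ≤ (p : ℝ) * c p := mul_nonneg p.cast_nonneg (hc p)
  nlinarith [hc p, pow_le_one₀ hx0 hx1 (n := p - 1)]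

theorem tsum_coeff_mul_pow_pos (hc : ∀ p, 0 ≤ c p)
    (hsum : Summable fun p : ℕ => (2 : ℝ) ^ p * c p) {x : ℝ} (hx0 : 0 < x) (hx1 : x ≤ 1)
    {p₀ : ℕ} (hp₀ : 0 < c p₀) : 0 < ∑' p, c p * x ^ p :=
  (summable_coeff_mul_pow hc hsum hx0.le hx1).tsum_pos
    (fun p => mul_nonneg (hc p) (pow_nonneg hx0.le p)) p₀ (by positivity)

theorem tsum_deriv_coeff_mul_pow_pos (hc : ∀ p, 0 ≤ c p)
    (hsum : Summable fun p : ℕ => (2 : ℝ) ^ p * c p) {x : ℝ} (hx0 : 0 < x) (hx1 : x ≤ 1)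
    {p₀ : ℕ} (hp : 1 ≤ p₀) (hp₀ : 0 < c p₀) : 0 < ∑' p : ℕ, (p : ℝ) * c p * x ^ (p - 1) := by
  refine (summable_deriv_coeff_mul_pow hc hsum hx0.le hx1).tsum_pos
    (fun p => by have := hc p; positivity) p₀ ?_
  have : (0 : ℝ) < p₀ := by exact_mod_cast hp
  positivity

theorem strictMonoOn_tsum_deriv_coeff_mul_pow (hc : ∀ p, 0 ≤ c p)
    (hsum : Summable fun p : ℕ => (2 : ℝ) ^ p * c p) {p₀ : ℕ} (hp : 2 ≤ p₀) (hp₀ : 0 < c p₀) :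
    StrictMonoOn (fun x => ∑' p : ℕ, (p : ℝ) * c p * x ^ (p - 1)) (Icc 0 1) := by
  intro x hx y hy hxy
  refine Summable.tsum_lt_tsum (i := p₀) (fun p => ?_) ?_
    (summable_deriv_coeff_mul_pow hc hsum hx.1 hx.2)
    (summable_deriv_coeff_mul_pow hc hsum hy.1 hy.2)
  · exact mul_le_mul_of_nonneg_left (pow_le_pow_left₀ hx.1 hxy.le _)
      (mul_nonneg p.cast_nonneg (hc p))
  · have : (0 : ℝ) < p₀ := by exact_mod_cast (by omega : 0 < p₀)
    exact mul_lt_mul_of_pos_left (pow_lt_pow_left₀ hxy hx.1 (by omega)) (by positivity)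

theorem two_mul_tsum_coeff_mul_pow_lt (hc : ∀ p, 0 ≤ c p)
    (hsum : Summable fun p : ℕ => (2 : ℝ) ^ p * c p) (hc0 : c 0 = 0) (hc1 : c 1 = 0)
    {x : ℝ} (hx0 : 0 < x) (hx1 : x ≤ 1) {p₀ : ℕ} (hp : 3 ≤ p₀) (hp₀ : 0 < c p₀) :
    2 * ∑' p, c p * x ^ p < x * ∑' p : ℕ, (p : ℝ) * c p * x ^ (p - 1) := by
  have euler : ∀ p : ℕ, x * ((p : ℝ) * c p * x ^ (p - 1)) = p * c p * x ^ p := by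
    rintro (_ | p)
    · simp
    · simp only [Nat.add_sub_cancel, pow_succ]; ring
  rw [← tsum_mul_left, ← tsum_mul_left]
  refine Summable.tsum_lt_tsum (i := p₀) (fun p => ?_) ?_
    ((summable_coeff_mul_pow hc hsum hx0.le hx1).mul_left 2)
    ((summable_deriv_coeff_mul_pow hc hsum hx0.le hx1).mul_left x)
  · rw [euler]
    rcases p with _ | _ | p
    · simp [hc0]
    · simp [hc1]
    · have : (2 : ℝ) ≤ (p + 2 : ℕ) := by exact_mod_cast Nat.le_add_left 2 p
      have := mul_nonneg (hc (p + 2)) (pow_nonneg hx0.le (p + 2))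
      nlinarith
  · rw [euler]
    have : (3 : ℝ) ≤ p₀ := by exact_mod_cast hp
    have := mul_pos hp₀ (pow_pos hx0 p₀)
    nlinarith

end PowerSeries

noncomputable def twoCritFun (a β s t u : ℝ) : ℝ :=
  a - β * u + β * (s + t) * Real.log u + β * s * t / u

section TwoCritFun

variable {a β s t : ℝ}

theorem hasDerivAt_twoCritFun {u : ℝ} (hu : 0 < u) :
    HasDerivAt (twoCritFun a β s t) (-(β * (u - s) * (u - t)) / u ^ 2) u := by
  have h := ((((hasDerivAt_id u).const_mul β).const_sub a).add
    ((Real.hasDerivAt_log hu.ne').const_mul (β * (s + t)))).add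
    ((hasDerivAt_inv hu.ne').const_mul (β * s * t))
  refine (h.congr_deriv ?_).congr_of_eventuallyEq (.of_forall fun v => ?_)
  · field_simp
    ring
  · simp [twoCritFun, div_eq_mul_inv]

theorem continuousOn_twoCritFun : ContinuousOn (twoCritFun a β s t) (Ioi 0) :=
  fun _ hu => (hasDerivAt_twoCritFun hu).continuousAt.continuousWithinAt

theorem strictAntiOn_twoCritFun {D : Set ℝ} (hD : Convex ℝ D) (hD0 : D ⊆ Ioi 0) (hβ : 0 < β)
    (h : ∀ u ∈ interior D, 0 < (u - s) * (u - t)) : StrictAntiOn (twoCritFun a β s t) D := by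
  refine strictAntiOn_of_deriv_neg hD (continuousOn_twoCritFun.mono hD0) fun u hu => ?_
  have hu0 : 0 < u := hD0 (interior_subset hu)
  rw [(hasDerivAt_twoCritFun hu0).deriv]
  have := h u hu
  exact div_neg_of_neg_of_pos (by nlinarith) (by positivity)

theorem strictMonoOn_twoCritFun {D : Set ℝ} (hD : Convex ℝ D) (hD0 : D ⊆ Ioi 0) (hβ : 0 < β)
    (h : ∀ u ∈ interior D, (u - s) * (u - t) < 0) : StrictMonoOn (twoCritFun a β s t) D := by
  refine strictMonoOn_of_deriv_pos hD (continuousOn_twoCritFun.mono hD0) fun u hu => ?_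
  have hu0 : 0 < u := hD0 (interior_subset hu)
  rw [(hasDerivAt_twoCritFun hu0).deriv]
  have := h u hu
  exact div_pos (by nlinarith) (by positivity)

theorem tendsto_twoCritFun_nhdsGT_zero (hβst : 0 < β * s * t) :
    Tendsto (twoCritFun a β s t) (𝓝[>] 0) atTop := by
  have hlin : Tendsto (fun u => a - β * u) (𝓝[>] 0) (𝓝 (a - β * 0)) :=
    ((continuous_const.sub (continuous_const.mul continuous_id)).tendsto 0).mono_left
      nhdsWithin_le_nhds
  -- `u · (β (s + t) log u + β s t / u) → β s t` as `u log u → 0`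
  have hnum : Tendsto (fun u => β * (s + t) * (Real.log u * u) + β * s * t) (𝓝[>] 0)
      (𝓝 (β * (s + t) * 0 + β * s * t)) := by
    have := tendsto_log_mul_rpow_nhdsGT_zero (r := 1) one_pos
    simp only [Real.rpow_one] at this
    exact (this.const_mul _).add tendsto_const_nhds
  have hsing := hnum.pos_mul_atTop (by simpa using hβst) tendsto_inv_nhdsGT_zero
  refine (hlin.add_atTop hsing).congr' ?_
  filter_upwards [self_mem_nhdsWithin] with u (hu : 0 < u)
  simp only [twoCritFun]
  field_simp
  ring

theorem exists_twoCritFun_eq_zero_iff (hβ : 0 < β) (hs : 0 < s) (hst : s < t)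
    (ht : twoCritFun a β s t t = 0) :
    ∃ u₀, 0 < u₀ ∧ u₀ < s ∧ ∀ u, 0 < u → (twoCritFun a β s t u = 0 ↔ u = u₀ ∨ u = t) := by
  set f := twoCritFun a β s t
  have anti₁ : StrictAntiOn f (Ioc 0 s) :=
    strictAntiOn_twoCritFun (convex_Ioc 0 s) (fun u hu => hu.1) hβ fun u hu => by
      rw [interior_Ioc] at hu; nlinarith [hu.2]
  have mono : StrictMonoOn f (Icc s t) :=
    strictMonoOn_twoCritFun (convex_Icc s t) (fun u hu => hs.trans_le hu.1) hβ fun u hu => by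
      rw [interior_Icc] at hu; nlinarith [hu.1, hu.2]
  have anti₂ : StrictAntiOn f (Ici t) :=
    strictAntiOn_twoCritFun (convex_Ici t) (fun u hu => (hs.trans hst).trans_le hu) hβ
      fun u hu => by rw [interior_Ici] at hu; nlinarith [mem_Ioi.mp hu]
  have hfs : f s < 0 := ht ▸ mono ⟨le_rfl, hst.le⟩ ⟨hst.le, le_rfl⟩ hst
  obtain ⟨u₁, hfu₁, hu₁⟩ : ∃ u₁, 0 < f u₁ ∧ u₁ ∈ Ioo 0 s :=
    (((tendsto_twoCritFun_nhdsGT_zero (mul_pos (mul_pos hβ hs) (hs.trans hst))).eventually_gt_atTop 0).and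
      (Ioo_mem_nhdsGT hs)).exists
  obtain ⟨u₀, hu₀, hfu₀⟩ := intermediate_value_Ioo' hu₁.2.le
    (continuousOn_twoCritFun.mono fun u hu => hu₁.1.trans_le hu.1) ⟨hfs, hfu₁⟩
  have hu₀s : u₀ ∈ Ioc 0 s := ⟨hu₁.1.trans hu₀.1, hu₀.2.le⟩
  refine ⟨u₀, hu₀s.1, hu₀.2, fun u hu => ⟨fun hfu => ?_, ?_⟩⟩
  · rcases le_or_gt u s with hus | hsu
    · exact .inl (anti₁.injOn ⟨hu, hus⟩ hu₀s (hfu.trans hfu₀.symm))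
    rcases lt_trichotomy u t with hut | rfl | htu
    · exact absurd (mono ⟨hsu.le, hut.le⟩ ⟨hst.le, le_rfl⟩ hut) (by rw [hfu, ht]; exact lt_irrefl 0)
    · exact .inr rfl
    · exact absurd (anti₂ (mem_Ici.2 le_rfl) htu.le htu) (by rw [hfu, ht]; exact lt_irrefl 0)
  · rintro (rfl | rfl)
    exacts [hfu₀, ht]

end TwoCritFun

theorem f1_two_zeros_of_pos (q X P B : ℝ) (hq : 0 < q) (hq1 : q < 1)
    (hX : 0 < X) (hP : 0 < P) (hB : 0 < B) (h2X : 2 * X < q * P) (f1 : ℝ → ℝ)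
    (hf1 : ∀ z : ℝ, f1 z =
      -((q * P - X) * (1 - q) * (1 + z) / B)
        - q ^ 2 * Real.log (q * B / ((1 + z) * P * (1 - q)))
        + q ^ 2 - 2 * X * q / P
        + X * q ^ 2 * B / ((1 + z) * P ^ 2 * (1 - q)))
    (z2s z2b : ℝ)
    (hz2s : z2s = q * X * B / (P * (q * P - X) * (1 - q)) - 1)
    (hz2b : z2b = q * B / ((1 - q) * P) - 1) :
    ∃ z0 : ℝ, -1 < z0 ∧ z0 < z2s ∧
      ∀ z : ℝ, -1 < z → (f1 z = 0 ↔ z = z0 ∨ z = z2b) := by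
  have h1q : 0 < 1 - q := by linarith
  have hA : 0 < q * P - X := by linarith
  set β := (q * P - X) * (1 - q) / B
  set s := q * X * B / (P * (q * P - X) * (1 - q))
  set t := q * B / ((1 - q) * P)
  set a := q ^ 2 - q ^ 2 * Real.log t - 2 * X * q / P
  have hβ : 0 < β := by positivity
  have hs : 0 < s := by positivity
  have ht : 0 < t := by positivity
  have hβs : β * s = X * q / P := by simp only [β, s]; field_simp
  have hβt : β * t = q ^ 2 - X * q / P := by simp only [β, t]; field_simp
  have hβst : β * (s + t) = q ^ 2 := by linear_combination hβs + hβt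
  have hst : s < t := by
    refine lt_of_mul_lt_mul_left ?_ hβ.le
    rw [hβs, hβt, lt_sub_iff_add_lt, ← two_mul, mul_div_assoc', div_lt_iff₀ hP]
    nlinarith
  have hf1_eq : ∀ z, -1 < z → f1 z = twoCritFun a β s t (1 + z) := by
    intro z hz
    have hu : 0 < 1 + z := by linarith
    have hlog : q * B / ((1 + z) * P * (1 - q)) = t / (1 + z) := by simp only [t]; field_simp
    rw [hf1, hlog, Real.log_div ht.ne' hu.ne', twoCritFun, hβst, hβs]
    simp only [a, β, t]
    field_simp
    ring
  have hft : twoCritFun a β s t t = 0 := by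
    rw [twoCritFun, hβst, hβs, hβt, mul_div_cancel_right₀ _ ht.ne']
    ring
  obtain ⟨u₀, hu₀, hu₀s, hzeros⟩ := exists_twoCritFun_eq_zero_iff hβ hs hst hft
  refine ⟨u₀ - 1, by linarith, by rw [hz2s]; linarith, fun z hz => ?_⟩
  rw [hf1_eq z hz, hzeros _ (by linarith), hz2b, eq_sub_iff_add_eq, eq_sub_iff_add_eq, add_comm z]

/-- For `ξ(x) = ∑_{p≥2} c_p x^p` with nonnegative coefficients, `ξ ≠ x²`, `q ∈ (0,1)`,
the function `f₁(q,·)` on `(−1,∞)` has exactly two zeros: one strictly less than the local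
minimum point `z₂ˢ(q)` and the other equal to `z₂ᵇ(q) = q(ξ'(1)−ξ'(q))/((1−q)ξ'(q)) − 1`. -/
theorem f1_two_zeros
    (c : ℕ → ℝ) (hc : ∀ p, 0 ≤ c p) (hc0 : c 0 = 0) (hc1 : c 1 = 0)
    (hsum : Summable (fun p : ℕ => (2 : ℝ) ^ p * c p))
    (hne : ∃ p : ℕ, 3 ≤ p ∧ 0 < c p)
    (xi xi' : ℝ → ℝ)
    (hxi : ∀ x : ℝ, xi x = ∑' p : ℕ, c p * x ^ p)
    (hxi' : ∀ x : ℝ, xi' x = ∑' p : ℕ, (p : ℝ) * c p * x ^ (p - 1))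
    (q : ℝ) (hq : 0 < q) (hq1 : q < 1)
    (f1 : ℝ → ℝ)
    (hf1 : ∀ z : ℝ, f1 z =
      -((q * xi' q - xi q) * (1 - q) * (1 + z) / (xi' 1 - xi' q))
        - q ^ 2 * Real.log (q * (xi' 1 - xi' q) / ((1 + z) * xi' q * (1 - q)))
        + q ^ 2 - 2 * xi q * q / xi' q
        + xi q * q ^ 2 * (xi' 1 - xi' q) / ((1 + z) * xi' q ^ 2 * (1 - q)))
    (z2s z2b : ℝ)
    (hz2s : z2s = q * xi q * (xi' 1 - xi' q) / (xi' q * (q * xi' q - xi q) * (1 - q)) - 1)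
    (hz2b : z2b = q * (xi' 1 - xi' q) / ((1 - q) * xi' q) - 1) :
    ∃ z0 : ℝ, -1 < z0 ∧ z0 < z2s ∧
      ∀ z : ℝ, -1 < z → (f1 z = 0 ↔ z = z0 ∨ z = z2b) := by
  obtain ⟨p₀, hp₀3, hp₀⟩ := hne
  have hX : 0 < xi q := hxi q ▸ tsum_coeff_mul_pow_pos hc hsum hq hq1.le hp₀
  have hP : 0 < xi' q := hxi' q ▸ tsum_deriv_coeff_mul_pow_pos hc hsum hq hq1.le (by omega) hp₀
  have hB : 0 < xi' 1 - xi' q := by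
    have := strictMonoOn_tsum_deriv_coeff_mul_pow hc hsum (by omega) hp₀
      ⟨hq.le, hq1.le⟩ ⟨zero_le_one, le_rfl⟩ hq1
    simp only [← hxi'] at this
    linarith
  have h2X : 2 * xi q < q * xi' q := by
    rw [hxi, hxi']
    exact two_mul_tsum_coeff_mul_pow_lt hc hsum hc0 hc1 hq hq1.le hp₀3 hp₀
  exact f1_two_zeros_of_pos q (xi q) (xi' q) (xi' 1 - xi' q) hq hq1 hX hP hB h2X f1 hf1 z2s z2b
    hz2s hz2b
end

section
/- A real polynomial has at most as many positive real roots (counted with multiplicity) as the number of sign changes in its sequence of nonzero coefficients (Descartes' rule of signs). -/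
/-!
Descartes' rule is `Polynomial.roots_countP_pos_le_signVariations`: a positive root `a` splits off
as `P = (X - a) * Q`, and multiplying by `X - a` adds at least one sign change. Mathlib counts sign
changes on the coefficients listed from the leading one down, as the length of the destuttered
sign list minus one. That length minus one is the number of adjacent pairs of distinct signs, and
this count does not change when the list is reversed.
-/

open scoped Classical

noncomputable def signChanges (P : Polynomial ℝ) : ℕ :=
  let l := ((List.range (P.natDegree + 1)).map P.coeff).filter (fun a => decide (a ≠ 0))
  (l.zip l.tail).countP (fun p => decide (p.1 * p.2 < 0))

namespace List

variable {α β : Type*}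

theorem zip_reverse_tail_reverse (l : List α) :
    l.reverse.zip l.reverse.tail = ((l.zip l.tail).map Prod.swap).reverse := by
  refine ext_getElem (by simp) fun i h₁ _ => ?_
  simp only [length_zip, length_reverse, length_tail] at h₁
  simp [getElem_reverse]
  congr 1
  omega

theorem countP_zip_tail_reverse {p : α × α → Bool} (hp : ∀ a b, p (a, b) = p (b, a))
    (l : List α) : (l.reverse.zip l.reverse.tail).countP p = (l.zip l.tail).countP p := by
  rw [zip_reverse_tail_reverse, countP_reverse, countP_map]
  exact countP_congr fun ⟨a, b⟩ _ => by simp [hp b a]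

theorem countP_zip_tail_map (f : α → β) (p : β × β → Bool) (l : List α) :
    ((l.map f).zip (l.map f).tail).countP p = (l.zip l.tail).countP (p ∘ Prod.map f f) := by
  rw [← map_tail, zip_map, countP_map]

theorem length_destutter'_ne [DecidableEq α] (a : α) (l : List α) :
    (l.destutter' (· ≠ ·) a).length = ((a :: l).zip l).countP (fun p => p.1 ≠ p.2) + 1 := by
  induction l generalizing a with
  | nil => simp
  | cons b l ih =>
    by_cases hab : a = b
    · subst hab
      simp [ih]
    · simp [hab, ih]

theorem length_destutter_ne_sub_one [DecidableEq α] (l : List α) :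
    (l.destutter (· ≠ ·)).length - 1 = (l.zip l.tail).countP (fun p => p.1 ≠ p.2) := by
  cases l with
  | nil => simp
  | cons a l => simp [destutter_cons', length_destutter'_ne]

end List

theorem sign_ne_sign_iff_mul_neg {R : Type*} [Ring R] [LinearOrder R] [IsStrictOrderedRing R]
    {a b : R} (ha : a ≠ 0) (hb : b ≠ 0) : SignType.sign a ≠ SignType.sign b ↔ a * b < 0 := by
  rcases ha.lt_or_gt with ha | ha <;> rcases hb.lt_or_gt with hb | hb <;>
    simp [sign_neg, sign_pos, ha, hb, mul_neg_iff, ha.not_gt, hb.not_gt]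

namespace Polynomial

theorem coeffList_eq_reverse {R : Type*} [Semiring R] {P : R[X]} (hP : P ≠ 0) :
    P.coeffList = ((List.range (P.natDegree + 1)).map P.coeff).reverse := by
  rw [coeffList, withBotSucc_degree_eq_natDegree_add_one hP, List.map_reverse]

end Polynomial

open Polynomial

theorem signChanges_eq_signVariations (P : ℝ[X]) : signChanges P = P.signVariations := by
  by_cases hP : P = 0
  · simp [hP, signChanges]
  set l := ((List.range (P.natDegree + 1)).map P.coeff).filter (· ≠ 0)
  have hsigns :
      (P.coeffList.map SignType.sign).filter (· ≠ 0) = (l.map SignType.sign).reverse := by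
    rw [coeffList_eq_reverse hP, List.filter_map, List.filter_reverse, List.map_reverse]
    congr 2
    exact List.filter_congr fun x _ => by simp
  rw [signVariations, hsigns, List.length_destutter_ne_sub_one,
    List.countP_zip_tail_reverse (fun a b => by simp [eq_comm]), List.countP_zip_tail_map]
  refine List.countP_congr fun ⟨a, b⟩ hab => ?_
  have hnz : ∀ x ∈ l, x ≠ 0 := fun x hx => by simpa using (List.mem_filter.mp hx).2
  obtain ⟨ha, hb⟩ := List.of_mem_zip hab
  simp [sign_ne_sign_iff_mul_neg (hnz a ha) (hnz b (List.mem_of_mem_tail hb))]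

/-- Descartes' rule of signs: a real polynomial has at most as many strictly positive
real roots (counted with multiplicity) as sign changes in its coefficient sequence. -/
theorem descartes_rule_of_signs (P : Polynomial ℝ) :
    (P.roots.filter (fun x => 0 < x)).card ≤ signChanges P := by
  rw [← Multiset.countP_eq_card_filter, signChanges_eq_signVariations]
  exact roots_countP_pos_le_signVariations P
end

section
/- For any integer s ≥ 3, one has the polynomial identity: Σ_{k=1}^{s−2} k q^{k−1} · Σ_{j=1}^{s−1} (s−j) q^{j−1} − Σ_{i=1}^{s−1} q^{i−1} · Σ_{j=1}^{s−2} j(s−1−j) q^{j−1} = Σ_{n=s−2}^{2s−5} q^n · (1/6)(2s−n−3)(2s−n−4)(2s−n−5) + Σ_{n=0}^{s−3} q^n · (1/6)(n+1)(n+2)(n+3), as polynomials in q. -/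
open Finset

lemma key2 (n : ℕ) (q : ℝ) :
    ((n:ℝ)+2) * q^(n+1) * (∑ i ∈ range (n+2), ((n:ℝ)+2-i) * q^i)
      - q^(n+2) * (∑ i ∈ range (n+1), ((i:ℝ)+1)*((n:ℝ)+1-i) * q^i)
    = (∑ i ∈ range (n+2), q^(n+2+i) * (1/6*((n:ℝ)+3-i)*((n:ℝ)+2-i)*((n:ℝ)+1-i)))
      + q^(n+1) * (1/6*((n:ℝ)+2)*((n:ℝ)+3)*((n:ℝ)+4))
      - ∑ i ∈ range (n+1), q^(n+1+i) * (1/6*((n:ℝ)+2-i)*((n:ℝ)+1-i)*((n:ℝ)-i)) := by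
  have hD : (∑ m ∈ range (n+2), (m:ℝ)*((n:ℝ)+2-m) * q^(n+1+m))
      = q^(n+2) * (∑ i ∈ range (n+1), ((i:ℝ)+1)*((n:ℝ)+1-i) * q^i) := by
    rw [Finset.sum_range_succ', Finset.mul_sum]
    simp only [Nat.cast_zero, zero_mul, add_zero]
    exact Finset.sum_congr rfl fun i _ => by push_cast; ring
  have hR1 : (∑ m ∈ range (n+2), q^(n+1+m) * (1/6*((n:ℝ)+2-m)*((n:ℝ)+1-m)*((n:ℝ)-m)))
      = ∑ i ∈ range (n+1), q^(n+1+i) * (1/6*((n:ℝ)+2-i)*((n:ℝ)+1-i)*((n:ℝ)-i)) := by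
    rw [Finset.sum_range_succ]
    have h0 : q^(n+1+(n+1)) * (1/6*((n:ℝ)+2-((n+1:ℕ):ℝ))*((n:ℝ)+1-((n+1:ℕ):ℝ))*((n:ℝ)-((n+1:ℕ):ℝ))) = 0 := by
      push_cast; ring
    rw [h0, add_zero]
  have e1 : (∑ m ∈ range (n+3), q^(n+1+m) * (1/6*((n:ℝ)+4-m)*((n:ℝ)+3-m)*((n:ℝ)+2-m)))
      = ∑ m ∈ range (n+2), q^(n+1+m) * (1/6*((n:ℝ)+4-m)*((n:ℝ)+3-m)*((n:ℝ)+2-m)) := by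
    rw [Finset.sum_range_succ]
    have h0 : q^(n+1+(n+2)) * (1/6*((n:ℝ)+4-((n+2:ℕ):ℝ))*((n:ℝ)+3-((n+2:ℕ):ℝ))*((n:ℝ)+2-((n+2:ℕ):ℝ))) = 0 := by
      push_cast; ring
    rw [h0, add_zero]
  have e2 : (∑ m ∈ range (n+3), q^(n+1+m) * (1/6*((n:ℝ)+4-m)*((n:ℝ)+3-m)*((n:ℝ)+2-m)))
      = (∑ i ∈ range (n+2), q^(n+2+i) * (1/6*((n:ℝ)+3-i)*((n:ℝ)+2-i)*((n:ℝ)+1-i)))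
        + q^(n+1) * (1/6*((n:ℝ)+2)*((n:ℝ)+3)*((n:ℝ)+4)) := by
    rw [Finset.sum_range_succ']
    congr 1
    · exact Finset.sum_congr rfl fun i _ => by push_cast; ring
    · push_cast; ring
  rw [← hD, ← hR1, ← e2, e1, Finset.mul_sum, ← Finset.sum_sub_distrib, ← Finset.sum_sub_distrib]
  exact Finset.sum_congr rfl fun i _ => by push_cast; ring

lemma key (n : ℕ) (q : ℝ) :
    (∑ i ∈ range (n+1), ((i:ℝ)+1) * q^i) * (∑ i ∈ range (n+2), ((n:ℝ)+2-i) * q^i)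
      - (∑ i ∈ range (n+2), q^i) * (∑ i ∈ range (n+1), ((i:ℝ)+1)*((n:ℝ)+1-i) * q^i)
    = (∑ i ∈ range (n+1), q^(n+1+i) * (1/6*((n:ℝ)+2-i)*((n:ℝ)+1-i)*((n:ℝ)-i)))
      + ∑ i ∈ range (n+1), q^i * (1/6*((i:ℝ)+1)*((i:ℝ)+2)*((i:ℝ)+3)) := by
  induction n with
  | zero => norm_num [Finset.sum_range_succ]
  | succ n ih =>
    push_cast
    have hA : (∑ i ∈ range (n+1+1), ((i:ℝ)+1) * q^i)
        = (∑ i ∈ range (n+1), ((i:ℝ)+1) * q^i) + ((n:ℝ)+2) * q^(n+1) := by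
      rw [Finset.sum_range_succ]
      push_cast
      ring
    have hB : (∑ x ∈ range (n+1+2), ((n:ℝ)+1+2-(x:ℝ)) * q^x)
        = (∑ i ∈ range (n+2), ((n:ℝ)+2-(i:ℝ)) * q^i) + (∑ i ∈ range (n+2), q^i) + q^(n+2) := by
      have hidx : n+1+2 = (n+2)+1 := rfl
      rw [hidx, Finset.sum_range_succ, ← Finset.sum_add_distrib]
      congr 1
      · exact Finset.sum_congr rfl fun i _ => by push_cast; ring
      · push_cast; ring
    have hC : (∑ i ∈ range (n+1+2), q^i)
        = (∑ i ∈ range (n+2), q^i) + q^(n+2) := by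
      have hidx : n+1+2 = (n+2)+1 := rfl
      rw [hidx, Finset.sum_range_succ]
    have hD : (∑ x ∈ range (n+1+1), ((x:ℝ)+1)*((n:ℝ)+1+1-(x:ℝ)) * q^x)
        = (∑ i ∈ range (n+1), ((i:ℝ)+1)*((n:ℝ)+1-(i:ℝ)) * q^i)
          + ((∑ i ∈ range (n+1), ((i:ℝ)+1) * q^i) + ((n:ℝ)+2) * q^(n+1)) := by
      rw [Finset.sum_congr rfl (fun x (_ : x ∈ range (n+1+1)) =>
            show ((x:ℝ)+1)*((n:ℝ)+1+1-(x:ℝ)) * q^x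
              = ((x:ℝ)+1)*((n:ℝ)+1-(x:ℝ)) * q^x + ((x:ℝ)+1) * q^x by ring),
          Finset.sum_add_distrib,
          Finset.sum_range_succ (fun i => ((i:ℝ)+1)*((n:ℝ)+1-(i:ℝ)) * q^i),
          Finset.sum_range_succ (fun i => ((i:ℝ)+1) * q^i)]
      push_cast
      ring
    have hR1' : (∑ x ∈ range (n+1+1), q^(n+1+1+x) * (1/6*((n:ℝ)+1+2-(x:ℝ))*((n:ℝ)+1+1-(x:ℝ))*((n:ℝ)+1-(x:ℝ))))
        = ∑ i ∈ range (n+2), q^(n+2+i) * (1/6*((n:ℝ)+3-(i:ℝ))*((n:ℝ)+2-(i:ℝ))*((n:ℝ)+1-(i:ℝ))) := by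
      refine Finset.sum_congr rfl fun i _ => ?_
      have : n+1+1+i = n+2+i := rfl
      rw [this]; ring
    have hR2 : (∑ i ∈ range (n+1+1), q^i * (1/6*((i:ℝ)+1)*((i:ℝ)+2)*((i:ℝ)+3)))
        = (∑ i ∈ range (n+1), q^i * (1/6*((i:ℝ)+1)*((i:ℝ)+2)*((i:ℝ)+3)))
          + q^(n+1) * (1/6*((n:ℝ)+2)*((n:ℝ)+3)*((n:ℝ)+4)) := by
      rw [Finset.sum_range_succ]
      push_cast
      ring
    rw [hA, hB, hC, hD, hR1', hR2]
    linear_combination ih + key2 n q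

/-- Closed-form expansion of the quantity `I''` in the proof that `dz₂/dq < 0`:
for any integer `s ≥ 3`, as polynomials in `q`,
`(Σ_{k=1}^{s−2} k q^{k−1})(Σ_{j=1}^{s−1}(s−j)q^{j−1}) − (Σ_{i=1}^{s−1} q^{i−1})(Σ_{j=1}^{s−2} j(s−1−j)q^{j−1})
 = Σ_{n=s−2}^{2s−5} q^n (1/6)(2s−n−3)(2s−n−4)(2s−n−5) + Σ_{n=0}^{s−3} q^n (1/6)(n+1)(n+2)(n+3)`. -/
theorem I''_closed_form (s : ℕ) (hs : 3 ≤ s) (q : ℝ) :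
    (∑ k ∈ Finset.Icc 1 (s - 2), (k : ℝ) * q ^ (k - 1))
        * (∑ j ∈ Finset.Icc 1 (s - 1), ((s : ℝ) - j) * q ^ (j - 1))
      - (∑ i ∈ Finset.Icc 1 (s - 1), q ^ (i - 1))
        * (∑ j ∈ Finset.Icc 1 (s - 2), (j : ℝ) * ((s : ℝ) - 1 - j) * q ^ (j - 1))
    = (∑ n ∈ Finset.Icc (s - 2) (2 * s - 5), q ^ n
        * ((1 : ℝ) / 6 * (2 * (s : ℝ) - n - 3) * (2 * (s : ℝ) - n - 4)
            * (2 * (s : ℝ) - n - 5)))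
      + ∑ n ∈ Finset.Icc 0 (s - 3), q ^ n
        * ((1 : ℝ) / 6 * ((n : ℝ) + 1) * ((n : ℝ) + 2) * ((n : ℝ) + 3)) := by
  obtain ⟨n, rfl⟩ : ∃ n, s = n + 3 := ⟨s - 3, by omega⟩
  rw [show n + 3 - 2 = n + 1 from by omega, show n + 3 - 1 = n + 2 from by omega,
      show 2 * (n + 3) - 5 = 2 * n + 1 from by omega, show n + 3 - 3 = n from by omega]
  push_cast
  have cA : (∑ k ∈ Finset.Icc 1 (n+1), (k:ℝ) * q^(k-1))
      = ∑ i ∈ range (n+1), ((i:ℝ)+1) * q^i := by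
    rw [← Finset.Ico_add_one_right_eq_Icc, Finset.sum_Ico_eq_sum_range,
        show n+1+1-1 = n+1 from by omega]
    refine Finset.sum_congr rfl fun i _ => ?_
    rw [show 1+i-1 = i from by omega]
    push_cast; ring
  have cB : (∑ x ∈ Finset.Icc 1 (n+2), ((n:ℝ)+3-(x:ℝ)) * q^(x-1))
      = ∑ i ∈ range (n+2), ((n:ℝ)+2-(i:ℝ)) * q^i := by
    rw [← Finset.Ico_add_one_right_eq_Icc, Finset.sum_Ico_eq_sum_range,
        show n+2+1-1 = n+2 from by omega]
    refine Finset.sum_congr rfl fun i _ => ?_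
    rw [show 1+i-1 = i from by omega]
    push_cast; ring
  have cC : (∑ i ∈ Finset.Icc 1 (n+2), q^(i-1)) = ∑ i ∈ range (n+2), q^i := by
    rw [← Finset.Ico_add_one_right_eq_Icc, Finset.sum_Ico_eq_sum_range,
        show n+2+1-1 = n+2 from by omega]
    refine Finset.sum_congr rfl fun i _ => ?_
    rw [show 1+i-1 = i from by omega]
  have cD : (∑ x ∈ Finset.Icc 1 (n+1), (x:ℝ) * ((n:ℝ)+3-1-(x:ℝ)) * q^(x-1))
      = ∑ i ∈ range (n+1), ((i:ℝ)+1)*((n:ℝ)+1-(i:ℝ)) * q^i := by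
    rw [← Finset.Ico_add_one_right_eq_Icc, Finset.sum_Ico_eq_sum_range,
        show n+1+1-1 = n+1 from by omega]
    refine Finset.sum_congr rfl fun i _ => ?_
    rw [show 1+i-1 = i from by omega]
    push_cast; ring
  have cR1 : (∑ x ∈ Finset.Icc (n+1) (2*n+1),
        q^x * (1/6 * (2*((n:ℝ)+3)-(x:ℝ)-3) * (2*((n:ℝ)+3)-(x:ℝ)-4) * (2*((n:ℝ)+3)-(x:ℝ)-5)))
      = ∑ i ∈ range (n+1), q^(n+1+i) * (1/6*((n:ℝ)+2-(i:ℝ))*((n:ℝ)+1-(i:ℝ))*((n:ℝ)-(i:ℝ))) := by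
    rw [← Finset.Ico_add_one_right_eq_Icc, Finset.sum_Ico_eq_sum_range,
        show 2*n+1+1-(n+1) = n+1 from by omega]
    refine Finset.sum_congr rfl fun i _ => ?_
    push_cast; ring
  have cR2 : (∑ m ∈ Finset.Icc 0 n, q^m * (1/6 * ((m:ℝ)+1) * ((m:ℝ)+2) * ((m:ℝ)+3)))
      = ∑ i ∈ range (n+1), q^i * (1/6*((i:ℝ)+1)*((i:ℝ)+2)*((i:ℝ)+3)) := by
    rw [← Finset.Ico_add_one_right_eq_Icc, Finset.sum_Ico_eq_sum_range,
        show n+1-0 = n+1 from by omega]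
    refine Finset.sum_congr rfl fun i _ => ?_
    push_cast; ring
  rw [cA, cB, cC, cD, cR1, cR2]
  exact key n q
end

section
/- Let ξ(x) = (1−λ)x^s + λx^p with λ ∈ (0,1), integers 3 ≤ s, p ≥ s+2, and let q ∈ (0,1), z₂ > 0 solve the system and z₁ be given by 1 + z₁ + z₂ = q(ξ'(1)−ξ'(q))/(ξ'(q)(1−q)). Define h₂(u) = (ξ'(u)−ξ'(q))(1 + z₂ − q − uz₂) − (u−q)(ξ'(1)−ξ'(q)). Suppose h₂(0) < 0, h₂(q) = 0, h₂'(q) ≤ 0, h₂(1) = 0, and h₂(q') = 0 for some q' ∈ (q,1). Then h₂ has exactly one zero in (q, 1), and h₂ < 0 on some punctured interval (q, q+δ). -/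
/-!
With `ξ'(u) = a u^(s-1) + b u^(p-1)`, `a = (1-λ)s > 0`, the function `h₂` is the polynomial
`(a u^(s-1) + b u^(p-1)) (1 + z₂ - q - z₂ u) + c₁ u + h₂(0)`. Its three top coefficients add at
most three sign variations, and since `a (1 + z₂ - q) > 0 > h₂(0)` the remaining trinomial has
exactly one, whatever the sign of `c₁`. By Descartes' rule of signs `h₂` has at most four
positive roots counted with multiplicity, and four are known: `q`, `q'`, `1`, and either a second
copy of `q` (if `h₂'(q) = 0`) or a root in `(0, q)` (if `h₂'(q) < 0`, as then `h₂ > 0` just left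
of `q` while `h₂(0) < 0`). So no other root lies in `(q, 1)`, and dividing out these four roots
leaves a quotient with no root on `[0, ∞)`, hence negative there like `h₂(0)`; this gives the
sign of `h₂` on `(q, q')`.
-/

open Set Polynomial

theorem ContinuousOn.mul_pos_of_forall_ne_zero {f : ℝ → ℝ} {a b : ℝ}
    (hf : ContinuousOn f (Icc a b)) (hab : a ≤ b) (hne : ∀ x ∈ Icc a b, f x ≠ 0) :
    0 < f a * f b := by
  by_contra! h
  have hzero : (0 : ℝ) ∈ uIcc (f a) (f b) := by
    rw [mem_uIcc]; rw [mul_nonpos_iff] at h; tauto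
  rw [← uIcc_of_le hab] at hf hne
  obtain ⟨x, hx, hfx⟩ := intermediate_value_uIcc hf hzero
  exact hne x hx hfx

theorem exists_zero_Ioo_of_hasDerivAt_neg {f : ℝ → ℝ} {a b f' : ℝ} (hab : a < b)
    (hf : ContinuousOn f (Icc a b)) (ha : f a < 0) (hb : f b = 0) (hd : HasDerivAt f f' b)
    (hf' : f' < 0) : ∃ x ∈ Ioo a b, f x = 0 := by
  obtain ⟨t, hslope, ht⟩ :=
    (((hd.hasDerivWithinAt (s := Iio b)).limsup_slope_le' (lt_irrefl b) hf').and
      (Ioo_mem_nhdsLT hab)).exists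
  have hft : 0 < f t := by
    rw [slope_def_field, hb, sub_zero] at hslope
    exact ((div_neg_iff.1 hslope).resolve_right fun h => (sub_neg.2 ht.2).not_gt h.2).1
  obtain ⟨x, hx, hfx⟩ :=
    intermediate_value_Ioo ht.1.le (hf.mono (Icc_subset_Icc_right ht.2.le)) ⟨ha, hft⟩
  exact ⟨x, ⟨hx.1, hx.2.trans ht.2⟩, hfx⟩

namespace Polynomial

section SignVariations

variable {R : Type*} [Semiring R] {c : R} {n : ℕ} {P : R[X]}

theorem leadingCoeff_C_mul_X_pow_add (hc : c ≠ 0) (hP : P.degree < n) :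
    (C c * X ^ n + P).leadingCoeff = c := by
  rw [leadingCoeff_add_of_degree_lt' (by rwa [degree_C_mul_X_pow n hc]), leadingCoeff_C_mul_X_pow]

variable [LinearOrder R]

theorem signVariations_C_mul_X_pow_add (hc : c ≠ 0) (hP : P.degree < n) :
    signVariations (C c * X ^ n + P) =
      signVariations P + if SignType.sign c = -SignType.sign P.leadingCoeff then 1 else 0 := by
  have hdeg : P.degree < (C c * X ^ n).degree := by rwa [degree_C_mul_X_pow n hc]
  have hne : C c * X ^ n + P ≠ 0 := by
    rw [← degree_ne_bot, degree_add_eq_left_of_degree_lt hdeg, degree_C_mul_X_pow n hc]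
    exact WithBot.coe_ne_bot
  rw [signVariations_eq_eraseLead_add_ite hne, leadingCoeff_C_mul_X_pow_add hc hP,
    eraseLead_add_of_degree_lt_left hdeg, eraseLead_C_mul_X_pow, zero_add]

theorem signVariations_C_mul_X_pow_add_le (hP : P.degree < n) :
    signVariations (C c * X ^ n + P) ≤ signVariations P + 1 := by
  rcases eq_or_ne c 0 with rfl | hc
  · simp
  · rw [signVariations_C_mul_X_pow_add hc hP]
    split_ifs <;> omega

theorem signVariations_C_mul_X_pow_add_linear_le_one {a c₀ : R} (c₁ : R) {m : ℕ} (hm : 1 < m)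
    (ha : 0 < a) (hc₀ : c₀ < 0) :
    signVariations (C a * X ^ m + (C c₁ * X + C c₀)) ≤ 1 := by
  have hlin : (C c₁ * X + C c₀).degree < (m : WithBot ℕ) :=
    degree_linear_le.trans_lt (by exact_mod_cast hm)
  have hconst : (C c₀).degree < (1 : ℕ) := degree_C_le.trans_lt (by decide)
  rw [signVariations_C_mul_X_pow_add ha.ne' hlin]
  rcases eq_or_ne c₁ 0 with rfl | hc₁
  · simp [← monomial_zero_left, sign_pos ha, sign_neg hc₀]
  · rw [← pow_one X, signVariations_C_mul_X_pow_add hc₁ hconst,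
      leadingCoeff_C_mul_X_pow_add hc₁ hconst]
    rcases hc₁.lt_or_gt with h | h <;>
      simp [← monomial_zero_left, sign_pos ha, sign_neg hc₀, sign_pos, sign_neg, h]

end SignVariations

theorem signVariations_binomial_mul_linear_add_le_four {R : Type*} [CommRing R] [LinearOrder R]
    [IsStrictOrderedRing R] {a A c₀ : R} (b z c₁ : R) {m k : ℕ} (hm : 1 < m) (hk : m + 1 < k)
    (ha : 0 < a) (hA : 0 < A) (hc₀ : c₀ < 0) :
    signVariations ((C a * X ^ m + C b * X ^ k) * (C A - C z * X) + C c₁ * X + C c₀) ≤ 4 := by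
  have hnf : (C a * X ^ m + C b * X ^ k) * (C A - C z * X) + C c₁ * X + C c₀ =
      C (-(b * z)) * X ^ (k + 1) + (C (b * A) * X ^ k +
        (C (-(a * z)) * X ^ (m + 1) + (C (a * A) * X ^ m + (C c₁ * X + C c₀)))) := by
    simp only [map_neg, map_mul]
    ring
  set T := C (a * A) * X ^ m + (C c₁ * X + C c₀)
  set T₁ := C (-(a * z)) * X ^ (m + 1) + T
  set T₂ := C (b * A) * X ^ k + T₁
  have hT : T.degree ≤ m := degree_add_le_of_degree_le (degree_C_mul_X_pow_le _ _)
    (degree_linear_le.trans (by exact_mod_cast hm.le))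
  have hT₁ : T₁.degree ≤ (m + 1 : ℕ) :=
    degree_add_le_of_degree_le (degree_C_mul_X_pow_le _ _)
    (hT.trans (by exact_mod_cast m.le_succ))
  have hT₂ : T₂.degree ≤ k := degree_add_le_of_degree_le (degree_C_mul_X_pow_le _ _)
    (hT₁.trans (by exact_mod_cast hk.le))
  have h₂ : signVariations (C (-(b * z)) * X ^ (k + 1) + T₂) ≤ T₂.signVariations + 1 :=
    signVariations_C_mul_X_pow_add_le (hT₂.trans_lt (by exact_mod_cast k.lt_succ_self))
  have h₁ : T₂.signVariations ≤ T₁.signVariations + 1 :=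
    signVariations_C_mul_X_pow_add_le (hT₁.trans_lt (by exact_mod_cast hk))
  have h₀ : T₁.signVariations ≤ T.signVariations + 1 :=
    signVariations_C_mul_X_pow_add_le (hT.trans_lt (by exact_mod_cast m.lt_succ_self))
  have hbot : T.signVariations ≤ 1 :=
    signVariations_C_mul_X_pow_add_linear_le_one c₁ hm (mul_pos ha hA) hc₀
  rw [hnf]
  omega

theorem exists_eq_prod_mul_of_countP_pos_roots_le (P : ℝ[X]) {R : Multiset ℝ}
    (hR : R ≤ P.roots) (hRpos : ∀ r ∈ R, 0 < r) (hcount : P.roots.countP (0 < ·) ≤ R.card)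
    (h0 : P.eval 0 ≠ 0) :
    ∃ G : ℝ[X], P = (R.map fun r => X - C r).prod * G ∧
      ∀ u, 0 ≤ u → 0 < G.eval 0 * G.eval u := by
  have hP : P ≠ 0 := by rintro rfl; simp at h0
  obtain ⟨G, hG⟩ := (Multiset.prod_X_sub_C_dvd_iff_le_roots hP R).2 hR
  have hG0 : G ≠ 0 := by rintro rfl; exact hP (by simpa using hG)
  have hroots : P.roots = R + G.roots := by
    rw [hG, roots_mul (hG ▸ hP), roots_multiset_prod_X_sub_C]
  have hGroots : ∀ x, 0 < x → G.eval x ≠ 0 := by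
    intro x hx hGx
    have hpos : 0 < G.roots.countP (0 < ·) :=
      Multiset.countP_pos.2 ⟨x, (mem_roots hG0).2 hGx, hx⟩
    rw [hroots, Multiset.countP_add, Multiset.countP_eq_card.2 hRpos] at hcount
    omega
  refine ⟨G, hG, fun u hu => G.continuousOn.mul_pos_of_forall_ne_zero hu fun x hx => ?_⟩
  rcases hx.1.eq_or_lt with rfl | hx0
  · exact right_ne_zero_of_mul (by rwa [hG, eval_mul] at h0)
  · exact hGroots x hx0

/-- `ρ` is a root in `(0, q)` if `P'(q) < 0`, and `ρ = q` (a double root) if `P'(q) = 0`. -/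
theorem exists_mem_Ioc_and_le_roots (P : ℝ[X]) {q q' r : ℝ} (hq : 0 < q) (hqq' : q < q')
    (hq'r : q' < r) (h0 : P.eval 0 < 0) (hPq : P.IsRoot q) (hdq : P.derivative.eval q ≤ 0)
    (hPq' : P.IsRoot q') (hPr : P.IsRoot r) : ∃ ρ ∈ Ioc 0 q, {ρ, q, q', r} ≤ P.roots := by
  have hP : P ≠ 0 := by rintro rfl; simp at h0
  suffices ∃ ρ ∈ Ioc 0 q, {ρ, q} ≤ P.roots by
    obtain ⟨ρ, hρ, hle⟩ := this
    refine ⟨ρ, hρ, ?_⟩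
    have hperm : ({ρ, q, q', r} : Multiset ℝ) = q' ::ₘ r ::ₘ {ρ, q} := by
      ext x
      simp only [Multiset.insert_eq_cons, Multiset.count_cons, Multiset.count_singleton]
      ring
    rw [hperm, Multiset.cons_le_of_notMem (by simp [hq'r.ne, (hρ.2.trans_lt hqq').ne', hqq'.ne']),
      Multiset.cons_le_of_notMem (by simp [(hρ.2.trans_lt (hqq'.trans hq'r)).ne',
        (hqq'.trans hq'r).ne'])]
    exact ⟨(mem_roots hP).2 hPq', (mem_roots hP).2 hPr, hle⟩
  rcases hdq.lt_or_eq with hneg | hzero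
  · obtain ⟨ρ, hρ, hPρ⟩ :=
      exists_zero_Ioo_of_hasDerivAt_neg hq P.continuousOn h0 hPq (P.hasDerivAt q) hneg
    refine ⟨ρ, ⟨hρ.1, hρ.2.le⟩, ?_⟩
    rw [Multiset.insert_eq_cons, Multiset.cons_le_of_notMem (by simpa using hρ.2.ne),
      Multiset.singleton_le]
    exact ⟨(mem_roots hP).2 hPρ, (mem_roots hP).2 hPq⟩
  · refine ⟨q, ⟨hq, le_rfl⟩, ?_⟩
    have hmult : 2 ≤ P.rootMultiplicity q :=
      (one_lt_rootMultiplicity_iff_isRoot hP).2 ⟨hPq, hzero⟩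
    rwa [← count_roots, Multiset.le_count_iff_replicate_le] at hmult

theorem root_unique_and_eval_neg (P : ℝ[X]) (hcount : P.roots.countP (0 < ·) ≤ 4)
    {q q' r : ℝ} (hq : 0 < q) (hqq' : q < q') (hq'r : q' < r) (h0 : P.eval 0 < 0)
    (hPq : P.IsRoot q) (hdq : P.derivative.eval q ≤ 0) (hPq' : P.IsRoot q') (hPr : P.IsRoot r) :
    (∀ u ∈ Ioo q r, P.IsRoot u → u = q') ∧ ∀ u ∈ Ioo q q', P.eval u < 0 := by
  have hP : P ≠ 0 := by rintro rfl; simp at h0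
  obtain ⟨ρ, hρ, hR⟩ := P.exists_mem_Ioc_and_le_roots hq hqq' hq'r h0 hPq hdq hPq' hPr
  have hRpos : ∀ x ∈ ({ρ, q, q', r} : Multiset ℝ), 0 < x := by
    simp only [Multiset.insert_eq_cons, Multiset.mem_cons, Multiset.mem_singleton]
    rintro x (rfl | rfl | rfl | rfl) <;> linarith [hρ.1]
  constructor
  · intro u hu hPu
    by_contra hne
    have hle : u ::ₘ {ρ, q, q', r} ≤ P.roots :=
      (Multiset.cons_le_of_notMem (by simp [(hρ.2.trans_lt hu.1).ne', hu.1.ne', hne, hu.2.ne])).2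
        ⟨(mem_roots hP).2 hPu, hR⟩
    have h5 := (Multiset.countP_le_of_le _ hle).trans hcount
    rw [Multiset.countP_eq_card.2 (Multiset.forall_mem_cons.2 ⟨hq.trans hu.1, hRpos⟩)] at h5
    simp at h5
  · intro u hu
    obtain ⟨G, hG, hsign⟩ :=
      P.exists_eq_prod_mul_of_countP_pos_roots_le hR hRpos (by simpa using hcount) h0.ne
    have hP0 := congrArg (eval 0) hG
    have hPu := congrArg (eval u) hG
    simp only [Multiset.insert_eq_cons, Multiset.map_cons, Multiset.map_singleton,
      Multiset.prod_cons, Multiset.prod_singleton, eval_mul, eval_sub, eval_X, eval_C] at hP0 hPu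
    simp only [zero_sub, neg_mul, mul_neg, neg_neg] at hP0
    have hG0 : eval 0 G < 0 := neg_of_mul_neg_right (hP0 ▸ h0)
      (mul_pos hρ.1 (mul_pos hq (mul_pos (hq.trans hqq') (hq.trans (hqq'.trans hq'r))))).le
    have hGu : eval u G < 0 := neg_of_mul_pos_right (hsign u (hq.trans hu.1).le) hG0.le
    have hprod : 0 < (u - ρ) * ((u - q) * ((u - q') * (u - r))) :=
      mul_pos (sub_pos.2 (hρ.2.trans_lt hu.1)) (mul_pos (sub_pos.2 hu.1)
        (mul_pos_of_neg_of_neg (sub_neg.2 hu.2) (sub_neg.2 (hu.2.trans hq'r))))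
    rw [hPu]
    exact mul_neg_of_pos_of_neg hprod hGu

end Polynomial

theorem exists_polynomial_of_h2 (s p : ℕ) (hs : 3 ≤ s) (hp : s + 2 ≤ p) (lam : ℝ)
    (hlam1 : lam < 1) (xi' : ℝ → ℝ)
    (hxi' : ∀ x : ℝ, xi' x = (1 - lam) * s * x ^ (s - 1) + lam * p * x ^ (p - 1))
    (q z₂ : ℝ) (hq1 : q < 1) (hz₂ : 0 < z₂) (h₂ : ℝ → ℝ)
    (hh₂ : ∀ u : ℝ, h₂ u =
      (xi' u - xi' q) * (1 + z₂ - q - u * z₂) - (u - q) * (xi' 1 - xi' q))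
    (h20 : h₂ 0 < 0) :
    ∃ H : ℝ[X], (∀ u, h₂ u = H.eval u) ∧ H.roots.countP (0 < ·) ≤ 4 := by
  refine ⟨(C ((1 - lam) * s) * X ^ (s - 1) + C (lam * p) * X ^ (p - 1)) *
      (C (1 + z₂ - q) - C z₂ * X) + C (xi' q * z₂ - (xi' 1 - xi' q)) * X + C (h₂ 0),
    fun u => ?_, ?_⟩
  · simp only [eval_add, eval_mul, eval_sub, eval_C, eval_X, eval_pow, hh₂, hxi',
      zero_pow (by omega : s - 1 ≠ 0), zero_pow (by omega : p - 1 ≠ 0)]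
    ring
  · have ha : 0 < (1 - lam) * s := mul_pos (sub_pos.2 hlam1) (by exact_mod_cast (by omega : 0 < s))
    exact (roots_countP_pos_le_signVariations _).trans
      (signVariations_binomial_mul_linear_add_le_four _ _ _ (by omega) (by omega) ha
        (by linarith) h20)

theorem h2_unique_zero_general
    (s p : ℕ) (hs : 3 ≤ s) (hp : s + 2 ≤ p)
    (lam : ℝ) (hlam1 : lam < 1)
    (xi' : ℝ → ℝ)
    (hxi' : ∀ x : ℝ, xi' x = (1 - lam) * s * x ^ (s - 1) + lam * p * x ^ (p - 1))
    (q z₂ : ℝ) (hq : 0 < q) (hq1 : q < 1) (hz₂ : 0 < z₂)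
    (h₂ : ℝ → ℝ)
    (hh₂ : ∀ u : ℝ, h₂ u =
      (xi' u - xi' q) * (1 + z₂ - q - u * z₂) - (u - q) * (xi' 1 - xi' q))
    (h20 : h₂ 0 < 0)
    (h2q : h₂ q = 0)
    (h2q' : deriv h₂ q ≤ 0)
    (h21 : h₂ 1 = 0)
    (hmid : ∃ q' : ℝ, q' ∈ Ioo q 1 ∧ h₂ q' = 0) :
    (∃! u : ℝ, u ∈ Ioo q 1 ∧ h₂ u = 0) ∧
    ∃ δ : ℝ, 0 < δ ∧ ∀ u : ℝ, u ∈ Ioo q (q + δ) → h₂ u < 0 := by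
  obtain ⟨H, hH, hcount⟩ :=
    exists_polynomial_of_h2 s p hs hp lam hlam1 xi' hxi' q z₂ hq1 hz₂ h₂ hh₂ h20
  obtain rfl : h₂ = fun u => H.eval u := funext hH
  obtain ⟨q', hq', hHq'⟩ := hmid
  obtain ⟨hunique, hneg⟩ := H.root_unique_and_eval_neg hcount hq hq'.1 hq'.2 h20 h2q
    (by rwa [Polynomial.deriv] at h2q') hHq' h21
  exact ⟨⟨q', ⟨hq', hHq'⟩, fun u hu => hunique u hu.1 hu.2⟩, q' - q, sub_pos.2 hq'.1,
    fun u hu => hneg u ⟨hu.1, by linarith [hu.2]⟩⟩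

/-- Root counting for `h₂(u) = (ξ'(u)−ξ'(q))(1+z₂−q−uz₂) − (u−q)(ξ'(1)−ξ'(q))` in the
`s+p` model: under `h₂(0) < 0`, `h₂(q) = 0`, `h₂'(q) ≤ 0`, `h₂(1) = 0` and `h₂(q') = 0`
for some `q' ∈ (q,1)`, `h₂` has exactly one zero in `(q,1)` and is negative on a
punctured right neighborhood of `q`. -/
theorem h2_unique_zero
    (s p : ℕ) (hs : 3 ≤ s) (hp : s + 2 ≤ p)
    (lam : ℝ) (hlam0 : 0 < lam) (hlam1 : lam < 1)
    (xi' : ℝ → ℝ)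
    (hxi' : ∀ x : ℝ, xi' x = (1 - lam) * s * x ^ (s - 1) + lam * p * x ^ (p - 1))
    (q z₁ z₂ : ℝ) (hq : 0 < q) (hq1 : q < 1) (hz₂ : 0 < z₂)
    (hz₁ : 1 + z₁ + z₂ = q * (xi' 1 - xi' q) / (xi' q * (1 - q)))
    (h₂ : ℝ → ℝ)
    (hh₂ : ∀ u : ℝ, h₂ u =
      (xi' u - xi' q) * (1 + z₂ - q - u * z₂) - (u - q) * (xi' 1 - xi' q))
    (h20 : h₂ 0 < 0)
    (h2q : h₂ q = 0)
    (h2q' : deriv h₂ q ≤ 0)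
    (h21 : h₂ 1 = 0)
    (hmid : ∃ q' : ℝ, q' ∈ Ioo q 1 ∧ h₂ q' = 0) :
    (∃! u : ℝ, u ∈ Ioo q 1 ∧ h₂ u = 0) ∧
    ∃ δ : ℝ, 0 < δ ∧ ∀ u : ℝ, u ∈ Ioo q (q + δ) → h₂ u < 0 :=
  h2_unique_zero_general s p hs hp lam hlam1 xi' hxi' q z₂ hq hq1 hz₂ h₂ hh₂ h20 h2q h2q' h21 hmid
end
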